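/- arXiv:1009.5664 — 10 statements merged into one kernel-verified Lean document; each statement's English description precedes it below -/
import Mathlib

section
/- Theorem 1.A. Let β ∈ [0,1], n ∈ ℕ, and let Δ̲ : {k ∈ ℕ₀^({0,1}²) : k₊₊ = n} → [−1,1] be a function. Then the following three assertions are equivalent: (i) Δ̲ is a lower β-confidence bound for the parameter q ↦ q₀₁ − q₁₀ in the multinomial model M = (M_{n,q} : q ∈ Prob({0,1}²)); (ii) Δ̲ is a lower β-confidence bound for the parameter (π,χ) ↦ π₁·(χ^{(2)}_{1|1} − χ^{(1)}_{1|1}) − (1−π₁)·(χ^{(2)}_{0|0} − χ^{(1)}_{0|0}) in the full latent class model P₂; (iii) Δ̲ is a lower β-confidence bound for the parameter (π,χ) ↦ π₁·(χ^{(2)}_{1|1} − χ^{(1)}_{1|1}) in the restricted latent class model P_{2,≤}. -/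
open scoped BigOperators

noncomputable section

/-- `p` is a discrete probability density on the finite set `X`,
i.e. a function `X → [0,1]` summing to `1`. -/
def IsProb {X : Type*} [Fintype X] (p : X → ℝ) : Prop :=
  (∀ x, 0 ≤ p x ∧ p x ≤ 1) ∧ ∑ x, p x = 1

/-- `χ` is a Markov transition density: `χ x` is a probability density for each `x`. -/
def IsMarkov {X Y : Type*} [Fintype Y] (χ : X → Y → ℝ) : Prop :=
  ∀ x, IsProb (χ x)

/-- The mixture density `μ₁(π,χ)` on `{0,1}` (indices: `χ i j = χ_{j|i}`). -/
def mu1 (π : Fin 2 → ℝ) (χ : Fin 2 → Fin 2 → ℝ) : Fin 2 → ℝ :=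
  fun j => ∑ i, π i * χ i j

/-- The mixture density `μ₂(π,χ)` on `{0,1}²` (indices: `χ i j = χ_{j|i}`). -/
def mu2 (π : Fin 2 → ℝ) (χ : Fin 2 → Fin 2 × Fin 2 → ℝ) : Fin 2 × Fin 2 → ℝ :=
  fun j => ∑ i, π i * χ i j

/-- First-test characteristic: `chi1 χ i ι = χ^{(1)}_{ι|i} = χ_{ι0|i} + χ_{ι1|i}`. -/
def chi1 (χ : Fin 2 → Fin 2 × Fin 2 → ℝ) : Fin 2 → Fin 2 → ℝ :=
  fun i ι => χ i (ι, 0) + χ i (ι, 1)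

/-- Second-test characteristic: `chi2 χ i ι = χ^{(2)}_{ι|i} = χ_{0ι|i} + χ_{1ι|i}`. -/
def chi2 (χ : Fin 2 → Fin 2 × Fin 2 → ℝ) : Fin 2 → Fin 2 → ℝ :=
  fun i ι => χ i (0, ι) + χ i (1, ι)

/-- The multinomial point mass `M_{n,q}({k}) = n! ∏_x q_x^{k_x}/k_x!`. -/
def mPMF {X : Type*} [Fintype X] (n : ℕ) (q : X → ℝ) (k : X → ℕ) : ℝ :=
  (n.factorial : ℝ) * ∏ x, q x ^ k x / ((k x).factorial : ℝ)

/-- `mProb n q S` is the probability, under the multinomial distribution `M_{n,q}`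
(supported on `{k : Σ_x k_x = n}`), of the event `S`. -/
def mProb {X : Type*} [Fintype X] (n : ℕ) (q : X → ℝ) (S : Set (X → ℕ)) : ℝ :=
  ∑' k : X → ℕ, Set.indicator {k | (∑ x, k x) = n ∧ k ∈ S} (mPMF n q) k


/-! For a latent class parameter `(π, χ)` with mixture `μ`, the difference `μ₀₁ - μ₁₀` equals the
parameter of the full model, and under `χ⁽¹⁾_{0|0} ≤ χ⁽²⁾_{0|0}` it is at most the parameter of
the restricted model. Conversely every `q` is the mixture of `π₁ = 1`, `χ_{·|1} = q`, with the
weightless class `0` answering `(0,0)` surely; this parameter is restricted, and all three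
parameters of interest equal `q₀₁ - q₁₀` there. Hence the coverage probabilities of `Δ` in the
three models bound each other. -/

/-- `P θ A` is the probability of the event `A` under the parameter `θ`. -/
def IsLowerConfidenceBound {Θ D : Type*} (P : Θ → Set D → ℝ) (S : Θ → Prop) (κ : Θ → ℝ)
    (β : ℝ) (Δ : D → ℝ) : Prop :=
  ∀ θ, S θ → β ≤ P θ {x | Δ x ≤ κ θ}

theorem isLowerConfidenceBound_comp_iff {Θ Q D : Type*} {P : Q → Set D → ℝ}
    {S : Θ → Prop} {T : Q → Prop} {κ : Θ → ℝ} {κ' : Q → ℝ} {β : ℝ} {Δ : D → ℝ}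
    (hP : ∀ q, T q → Monotone (P q)) (f : Θ → Q) (hf : ∀ θ, S θ → T (f θ))
    (hκ : ∀ θ, S θ → κ' (f θ) ≤ κ θ) (g : Q → Θ) (hg : ∀ q, T q → S (g q))
    (hfg : ∀ q, T q → f (g q) = q) (hκg : ∀ q, T q → κ (g q) = κ' q) :
    IsLowerConfidenceBound (fun θ => P (f θ)) S κ β Δ ↔ IsLowerConfidenceBound P T κ' β Δ := by
  constructor
  · intro h q hq
    simpa only [hfg q hq, hκg q hq] using h (g q) (hg q hq)
  · intro h θ hθ
    exact (h (f θ) (hf θ hθ)).trans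
      (hP _ (hf θ hθ) fun x (hx : Δ x ≤ κ' (f θ)) => hx.trans (hκ θ hθ))

section Multinomial

variable {X : Type*} [Fintype X]

theorem IsProb.nonneg {p : X → ℝ} (hp : IsProb p) (x : X) : 0 ≤ p x := (hp.1 x).1

theorem isProb_single [DecidableEq X] (a : X) : IsProb (Pi.single a (1 : ℝ)) := by
  refine ⟨fun x => ?_, by simp⟩
  rcases eq_or_ne x a with rfl | hx <;> simp [*]

theorem mPMF_nonneg (n : ℕ) {q : X → ℝ} (hq : ∀ x, 0 ≤ q x) (k : X → ℕ) :
    0 ≤ mPMF n q k :=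
  mul_nonneg (Nat.cast_nonneg _) <|
    Finset.prod_nonneg fun x _ => div_nonneg (pow_nonneg (hq x) _) (Nat.cast_nonneg _)

theorem summable_indicator_mPMF (n : ℕ) (q : X → ℝ) (S : Set (X → ℕ)) :
    Summable (Set.indicator {k | (∑ x, k x) = n ∧ k ∈ S} (mPMF n q)) := by
  refine summable_of_hasFiniteSupport <|
    (Set.Finite.pi fun _ : X => Set.finite_Iic n).subset fun k hk x _ => ?_
  have hsum : (∑ y, k y) = n := by
    by_contra h
    exact hk (Set.indicator_of_notMem (fun hm => h hm.1) _)
  exact hsum ▸ Finset.single_le_sum (fun _ _ => Nat.zero_le _) (Finset.mem_univ x)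

theorem mProb_mono (n : ℕ) {q : X → ℝ} (hq : ∀ x, 0 ≤ q x) : Monotone (mProb n q) :=
  fun _ _ hST => Summable.tsum_le_tsum
    (Set.indicator_le_indicator_of_subset (fun _ hk => ⟨hk.1, hST hk.2⟩)
      fun _ => mPMF_nonneg n hq _)
    (summable_indicator_mPMF n _ _) (summable_indicator_mPMF n _ _)

end Multinomial

section LatentClass

def fullModelParam (π : Fin 2 → ℝ) (χ : Fin 2 → Fin 2 × Fin 2 → ℝ) : ℝ :=
  π 1 * (chi2 χ 1 1 - chi1 χ 1 1) - (1 - π 1) * (chi2 χ 0 0 - chi1 χ 0 0)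

def restrictedModelParam (π : Fin 2 → ℝ) (χ : Fin 2 → Fin 2 × Fin 2 → ℝ) : ℝ :=
  π 1 * (chi2 χ 1 1 - chi1 χ 1 1)

variable {π : Fin 2 → ℝ} {χ : Fin 2 → Fin 2 × Fin 2 → ℝ}

theorem IsProb.sum_fin_two {p : Fin 2 → ℝ} (hp : IsProb p) : p 0 + p 1 = 1 := by
  simpa [Fin.sum_univ_two] using hp.2

theorem IsProb.sum_fin_two_prod {p : Fin 2 × Fin 2 → ℝ} (hp : IsProb p) :
    p (0, 0) + p (0, 1) + (p (1, 0) + p (1, 1)) = 1 := by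
  simpa [Fintype.sum_prod_type, Fin.sum_univ_two] using hp.2

theorem isProb_mu2 (hπ : IsProb π) (hχ : IsMarkov χ) : IsProb (mu2 π χ) := by
  have hπ1 := hπ.sum_fin_two
  refine ⟨fun j => ?_, ?_⟩
  · simp only [mu2, Fin.sum_univ_two]
    constructor <;> nlinarith [hπ.nonneg 0, hπ.nonneg 1, (hχ 0).1 j, (hχ 1).1 j]
  · simp only [mu2, Fintype.sum_prod_type, Fin.sum_univ_two]
    linear_combination π 0 * (hχ 0).sum_fin_two_prod + π 1 * (hχ 1).sum_fin_two_prod + hπ1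

theorem mu2_zero_one_sub_mu2_one_zero (hπ : IsProb π) :
    mu2 π χ (0, 1) - mu2 π χ (1, 0) = fullModelParam π χ := by
  simp only [fullModelParam, mu2, chi1, chi2, Fin.sum_univ_two]
  linear_combination (χ 0 (0, 1) - χ 0 (1, 0)) * hπ.sum_fin_two

theorem fullModelParam_le_restrictedModelParam (hπ : IsProb π)
    (hsp : chi1 χ 0 0 ≤ chi2 χ 0 0) : fullModelParam π χ ≤ restrictedModelParam π χ := by
  have hπ0 : 0 ≤ 1 - π 1 := by linarith [hπ.nonneg 0, hπ.sum_fin_two]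
  simp only [fullModelParam, restrictedModelParam]
  linarith [mul_nonneg hπ0 (sub_nonneg.2 hsp)]

def latentParamOf (q : Fin 2 × Fin 2 → ℝ) : (Fin 2 → ℝ) × (Fin 2 → Fin 2 × Fin 2 → ℝ) :=
  (![0, 1], ![Pi.single (0, 0) 1, q])

variable {q : Fin 2 × Fin 2 → ℝ}

theorem isProb_latentParamOf_fst : IsProb (latentParamOf q).1 :=
  ⟨fun x => by fin_cases x <;> norm_num [latentParamOf], by simp [latentParamOf]⟩

theorem isMarkov_latentParamOf_snd (hq : IsProb q) : IsMarkov (latentParamOf q).2 := by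
  intro i
  fin_cases i
  · exact isProb_single _
  · exact hq

theorem chi1_latentParamOf_le_chi2 :
    chi1 (latentParamOf q).2 0 0 ≤ chi2 (latentParamOf q).2 0 0 := by
  simp [latentParamOf, chi1, chi2]

theorem mu2_latentParamOf : mu2 (latentParamOf q).1 (latentParamOf q).2 = q := by
  funext j
  simp [latentParamOf, mu2]

theorem restrictedModelParam_latentParamOf :
    restrictedModelParam (latentParamOf q).1 (latentParamOf q).2 = q (0, 1) - q (1, 0) := by
  simp [restrictedModelParam, latentParamOf, chi1, chi2]

theorem fullModelParam_latentParamOf :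
    fullModelParam (latentParamOf q).1 (latentParamOf q).2 = q (0, 1) - q (1, 0) := by
  rw [← restrictedModelParam_latentParamOf]
  simp [fullModelParam, restrictedModelParam, latentParamOf]

theorem isLowerConfidenceBound_latentClass_iff {n : ℕ} {β : ℝ} {Δ : (Fin 2 × Fin 2 → ℕ) → ℝ}
    {S : (Fin 2 → ℝ) × (Fin 2 → Fin 2 × Fin 2 → ℝ) → Prop}
    {κ : (Fin 2 → ℝ) × (Fin 2 → Fin 2 × Fin 2 → ℝ) → ℝ}
    (hS : ∀ θ, S θ → IsProb θ.1 ∧ IsMarkov θ.2)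
    (hκ : ∀ θ, S θ → mu2 θ.1 θ.2 (0, 1) - mu2 θ.1 θ.2 (1, 0) ≤ κ θ)
    (hS_latentParamOf : ∀ q, IsProb q → S (latentParamOf q))
    (hκ_latentParamOf : ∀ q, κ (latentParamOf q) = q (0, 1) - q (1, 0)) :
    IsLowerConfidenceBound (fun θ => mProb n (mu2 θ.1 θ.2)) S κ β Δ ↔
      IsLowerConfidenceBound (mProb n) IsProb (fun q => q (0, 1) - q (1, 0)) β Δ :=
  isLowerConfidenceBound_comp_iff (P := mProb n) (S := S) (κ := κ)
    (κ' := fun q => q (0, 1) - q (1, 0)) (fun _ hq => mProb_mono n hq.nonneg)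
    (fun θ => mu2 θ.1 θ.2) (fun θ hθ => isProb_mu2 (hS θ hθ).1 (hS θ hθ).2) hκ latentParamOf
    hS_latentParamOf (fun _ _ => mu2_latentParamOf) (fun q _ => hκ_latentParamOf q)

end LatentClass

theorem stmt_0_general (β : ℝ) (n : ℕ)
    (Δ : ((Fin 2 × Fin 2) → ℕ) → ℝ) :
    ((∀ q : Fin 2 × Fin 2 → ℝ, IsProb q →
        β ≤ mProb n q {k | Δ k ≤ q (0, 1) - q (1, 0)}) ↔
      (∀ π : Fin 2 → ℝ, ∀ χ : Fin 2 → Fin 2 × Fin 2 → ℝ, IsProb π → IsMarkov χ →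
        β ≤ mProb n (mu2 π χ) {k | Δ k ≤
          π 1 * (chi2 χ 1 1 - chi1 χ 1 1) - (1 - π 1) * (chi2 χ 0 0 - chi1 χ 0 0)})) ∧
    ((∀ q : Fin 2 × Fin 2 → ℝ, IsProb q →
        β ≤ mProb n q {k | Δ k ≤ q (0, 1) - q (1, 0)}) ↔
      (∀ π : Fin 2 → ℝ, ∀ χ : Fin 2 → Fin 2 × Fin 2 → ℝ, IsProb π → IsMarkov χ →
        chi1 χ 0 0 ≤ chi2 χ 0 0 →
        β ≤ mProb n (mu2 π χ) {k | Δ k ≤ π 1 * (chi2 χ 1 1 - chi1 χ 1 1)})) := by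
  have full := isLowerConfidenceBound_latentClass_iff (n := n) (β := β) (Δ := Δ)
    (κ := fun θ => fullModelParam θ.1 θ.2) (fun _ hθ => hθ)
    (fun θ hθ => (mu2_zero_one_sub_mu2_one_zero hθ.1).le)
    (fun _ hq => ⟨isProb_latentParamOf_fst, isMarkov_latentParamOf_snd hq⟩)
    (fun _ => fullModelParam_latentParamOf)
  have restricted := isLowerConfidenceBound_latentClass_iff (n := n) (β := β) (Δ := Δ)
    (S := fun θ => IsProb θ.1 ∧ IsMarkov θ.2 ∧ chi1 θ.2 0 0 ≤ chi2 θ.2 0 0)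
    (κ := fun θ => restrictedModelParam θ.1 θ.2) (fun _ hθ => ⟨hθ.1, hθ.2.1⟩)
    (fun θ hθ => (mu2_zero_one_sub_mu2_one_zero hθ.1).trans_le
      (fullModelParam_le_restrictedModelParam hθ.1 hθ.2.2))
    (fun _ hq => ⟨isProb_latentParamOf_fst, isMarkov_latentParamOf_snd hq,
      chi1_latentParamOf_le_chi2⟩)
    (fun _ => restrictedModelParam_latentParamOf)
  simpa only [IsLowerConfidenceBound, Prod.forall, and_imp, fullModelParam,
    restrictedModelParam] using And.intro full.symm restricted.symm

/-- Theorem 1.A: for a `[-1,1]`-valued function `Δ` on `{k : k₊₊ = n}`, being a lower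
β-confidence bound for `q ↦ q₀₁ - q₁₀` in the multinomial model, for
`(π,χ) ↦ π₁(Se₂ - Se₁) - (1-π₁)(Sp₂ - Sp₁)` in the full latent class model, and for
`(π,χ) ↦ π₁(Se₂ - Se₁)` in the restricted latent class model (`Sp₁ ≤ Sp₂`), are all
equivalent. -/
theorem stmt_0 (β : ℝ) (hβ : β ∈ Set.Icc (0:ℝ) 1) (n : ℕ) (hn : 0 < n)
    (Δ : ((Fin 2 × Fin 2) → ℕ) → ℝ)
    (hΔ : ∀ k, (∑ x, k x) = n → Δ k ∈ Set.Icc (-1:ℝ) 1) :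
    ((∀ q : Fin 2 × Fin 2 → ℝ, IsProb q →
        β ≤ mProb n q {k | Δ k ≤ q (0, 1) - q (1, 0)}) ↔
      (∀ π : Fin 2 → ℝ, ∀ χ : Fin 2 → Fin 2 × Fin 2 → ℝ, IsProb π → IsMarkov χ →
        β ≤ mProb n (mu2 π χ) {k | Δ k ≤
          π 1 * (chi2 χ 1 1 - chi1 χ 1 1) - (1 - π 1) * (chi2 χ 0 0 - chi1 χ 0 0)})) ∧
    ((∀ q : Fin 2 × Fin 2 → ℝ, IsProb q →
        β ≤ mProb n q {k | Δ k ≤ q (0, 1) - q (1, 0)}) ↔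
      (∀ π : Fin 2 → ℝ, ∀ χ : Fin 2 → Fin 2 × Fin 2 → ℝ, IsProb π → IsMarkov χ →
        chi1 χ 0 0 ≤ chi2 χ 0 0 →
        β ≤ mProb n (mu2 π χ) {k | Δ k ≤ π 1 * (chi2 χ 1 1 - chi1 χ 1 1)})) :=
  stmt_0_general β n Δ

end
end

section
/- Theorem 1.B. Let β ∈ [0,1], n ∈ ℕ, and let Δ̲ and Δ̰ : {k ∈ ℕ₀^({0,1}²) : k₊₊ = n} → [−1,1] both be lower β-confidence bounds for the parameter q ↦ q₀₁ − q₁₀ in the multinomial model M (equivalently, for the parameter (π,χ) ↦ π₁·(χ^{(2)}_{1|1} − χ^{(1)}_{1|1}) − (1−π₁)·(χ^{(2)}_{0|0} − χ^{(1)}_{0|0}) in the full latent class model P₂, and for the parameter (π,χ) ↦ π₁·(χ^{(2)}_{1|1} − χ^{(1)}_{1|1}) in the restricted latent class model P_{2,≤}). If Δ̰ is worse than Δ̲ as a lower β-confidence bound for the estimation problem (P_{2,≤}, (π,χ) ↦ π₁·(χ^{(2)}_{1|1} − χ^{(1)}_{1|1})), then Δ̰ is worse than Δ̲ for the estimation problem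 (P₂, (π,χ) ↦ π₁·(χ^{(2)}_{1|1} − χ^{(1)}_{1|1}) − (1−π₁)·(χ^{(2)}_{0|0} − χ^{(1)}_{0|0})), and equivalently for (M, q ↦ q₀₁ − q₁₀). -/
open scoped BigOperators

noncomputable section

/-- Theorem 1.B: if `Δ̰` (`Δ₂`) is worse than `Δ̲` (`Δ₁`) as a lower β-confidence
bound for the sensitivity-gain parameter `(π,χ) ↦ π₁(Se₂ - Se₁)` in the restricted
latent class model, then it is also worse for the parameter
`(π,χ) ↦ π₁(Se₂ - Se₁) - (1-π₁)(Sp₂ - Sp₁)` in the full latent class model, and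
equivalently for `q ↦ q₀₁ - q₁₀` in the multinomial model. -/
theorem stmt_1 (β : ℝ) (hβ : β ∈ Set.Icc (0:ℝ) 1) (n : ℕ) (hn : 0 < n)
    (Δ₁ Δ₂ : ((Fin 2 × Fin 2) → ℕ) → ℝ)
    (hΔ₁ : ∀ k, (∑ x, k x) = n → Δ₁ k ∈ Set.Icc (-1:ℝ) 1)
    (hΔ₂ : ∀ k, (∑ x, k x) = n → Δ₂ k ∈ Set.Icc (-1:ℝ) 1)
    (hcb₁ : ∀ q : Fin 2 × Fin 2 → ℝ, IsProb q →
      β ≤ mProb n q {k | Δ₁ k ≤ q (0, 1) - q (1, 0)})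
    (hcb₂ : ∀ q : Fin 2 × Fin 2 → ℝ, IsProb q →
      β ≤ mProb n q {k | Δ₂ k ≤ q (0, 1) - q (1, 0)})
    (hworse : ∀ π : Fin 2 → ℝ, ∀ χ : Fin 2 → Fin 2 × Fin 2 → ℝ,
      IsProb π → IsMarkov χ → chi1 χ 0 0 ≤ chi2 χ 0 0 →
      ∀ t : ℝ, t < π 1 * (chi2 χ 1 1 - chi1 χ 1 1) →
        mProb n (mu2 π χ) {k | t ≤ Δ₂ k} ≤ mProb n (mu2 π χ) {k | t ≤ Δ₁ k}) :
    (∀ π : Fin 2 → ℝ, ∀ χ : Fin 2 → Fin 2 × Fin 2 → ℝ, IsProb π → IsMarkov χ →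
      ∀ t : ℝ, t < π 1 * (chi2 χ 1 1 - chi1 χ 1 1)
          - (1 - π 1) * (chi2 χ 0 0 - chi1 χ 0 0) →
        mProb n (mu2 π χ) {k | t ≤ Δ₂ k} ≤ mProb n (mu2 π χ) {k | t ≤ Δ₁ k}) ∧
    (∀ q : Fin 2 × Fin 2 → ℝ, IsProb q → ∀ t : ℝ, t < q (0, 1) - q (1, 0) →
      mProb n q {k | t ≤ Δ₂ k} ≤ mProb n q {k | t ≤ Δ₁ k}) := by
  have main : ∀ q : Fin 2 × Fin 2 → ℝ, IsProb q → ∀ t : ℝ, t < q (0, 1) - q (1, 0) →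
      mProb n q {k | t ≤ Δ₂ k} ≤ mProb n q {k | t ≤ Δ₁ k} := by
    intro q hq t ht
    set π : Fin 2 → ℝ := ![0, 1] with hπdef
    set χ : Fin 2 → Fin 2 × Fin 2 → ℝ := ![fun _ => 1/4, q] with hχdef
    have hπ : IsProb π := by
      constructor
      · intro x
        fin_cases x <;> simp [hπdef]
      · simp [hπdef, Fin.sum_univ_two]
    have hχm : IsMarkov χ := by
      intro i
      fin_cases i
      · constructor
        · intro x; norm_num [hχdef]
        · simp [hχdef, Fintype.sum_prod_type, Fin.sum_univ_two]
      · simpa [hχdef] using hq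
    have hres : chi1 χ 0 0 ≤ chi2 χ 0 0 := by
      simp [chi1, chi2, hχdef]
    have hmu : mu2 π χ = q := by
      funext j
      simp [mu2, hπdef, hχdef, Fin.sum_univ_two]
    have hparam : π 1 * (chi2 χ 1 1 - chi1 χ 1 1) = q (0, 1) - q (1, 0) := by
      simp [chi1, chi2, hπdef, hχdef]
    have h := hworse π χ hπ hχm hres t (by rw [hparam]; exact ht)
    rwa [hmu] at h
  refine ⟨?_, main⟩
  intro π χ hπ hχ t ht
  have hπ0 : π 0 = 1 - π 1 := by
    have := hπ.2
    rw [Fin.sum_univ_two] at this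
    linarith
  have hq : IsProb (mu2 π χ) := by
    constructor
    · intro j
      constructor
      · apply Finset.sum_nonneg
        intro i _
        exact mul_nonneg (hπ.1 i).1 ((hχ i).1 j).1
      · calc ∑ i, π i * χ i j ≤ ∑ i, π i * 1 := by
              apply Finset.sum_le_sum
              intro i _
              exact mul_le_mul_of_nonneg_left ((hχ i).1 j).2 (hπ.1 i).1
          _ = 1 := by simpa using hπ.2
    · have h0 := (hχ 0).2
      have h1 := (hχ 1).2
      have hπs := hπ.2
      rw [Fin.sum_univ_two] at hπs
      calc ∑ j, mu2 π χ j = ∑ j, (π 0 * χ 0 j + π 1 * χ 1 j) := by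
            apply Finset.sum_congr rfl
            intro j _
            simp [mu2, Fin.sum_univ_two]
        _ = π 0 * (∑ j, χ 0 j) + π 1 * (∑ j, χ 1 j) := by
            rw [Finset.sum_add_distrib, ← Finset.mul_sum, ← Finset.mul_sum]
        _ = 1 := by rw [h0, h1]; linarith
  apply main _ hq
  have hid : mu2 π χ (0, 1) - mu2 π χ (1, 0) =
      π 1 * (chi2 χ 1 1 - chi1 χ 1 1) - (1 - π 1) * (chi2 χ 0 0 - chi1 χ 0 0) := by
    simp [mu2, chi1, chi2, Fin.sum_univ_two, hπ0]
    ring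
  linarith [ht, hid.ge, hid.le]

end
end

section
/- Basic Lemma (first characterization). Let q ∈ Prob({0,1}²) and μ := μ₂. Then the set A := {(π₁, χ^{(1)}_{0|0}, χ^{(1)}_{1|1}, χ^{(2)}_{0|0}, χ^{(2)}_{1|1}) : (π,χ) ∈ Θ₂, μ(π,χ) = q} is nonempty and equals the set of all (Pr, Sp₁, Se₁, Sp₂, Se₂) ∈ [0,1]⁵ satisfying the four relations: (1−Pr)·(1−Sp₁) + Pr·Se₁ = q_{1+}; (1−Pr)·(1−Sp₂) + Pr·Se₂ = q_{+1}; (1−Pr)·min(Sp₁,Sp₂) + Pr·(1 − max(Se₁,Se₂)) ≥ q₀₀; and (1−Pr)·max(Sp₁+Sp₂−1, 0) + Pr·max(1−Se₁−Se₂, 0) ≤ q₀₀. -/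
open scoped BigOperators

noncomputable section

/-- Joint 2×2 distribution with first margin `m1`, second margin `m2`,
and `(0,0)`-mass `t`. -/
def J (m1 m2 t : ℝ) : Fin 2 × Fin 2 → ℝ := fun j =>
  if j.1 = 0 then (if j.2 = 0 then t else m1 - t) else (if j.2 = 0 then m2 - t else 1 - m1 - m2 + t)

lemma sum_prod2 (f : Fin 2 × Fin 2 → ℝ) :
    (∑ x, f x) = f (0,0) + f (0,1) + f (1,0) + f (1,1) := by
  rw [Fintype.sum_prod_type, Fin.sum_univ_two, Fin.sum_univ_two, Fin.sum_univ_two]; ring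

lemma J_isProb {m1 m2 t : ℝ} (h1 : 0 ≤ m1) (h1' : m1 ≤ 1) (h2 : 0 ≤ m2) (_h2' : m2 ≤ 1)
    (hl : max (m1 + m2 - 1) 0 ≤ t) (hu : t ≤ min m1 m2) : IsProb (J m1 m2 t) := by
  have hl1 : m1 + m2 - 1 ≤ t := le_trans (le_max_left _ _) hl
  have hl2 : (0:ℝ) ≤ t := le_trans (le_max_right _ _) hl
  have hu1 : t ≤ m1 := le_trans hu (min_le_left _ _)
  have hu2 : t ≤ m2 := le_trans hu (min_le_right _ _)
  constructor
  · rintro ⟨a, b⟩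
    fin_cases a <;> fin_cases b <;> simp [J] <;> constructor <;> linarith
  · rw [sum_prod2]; show t + (m1 - t) + (m2 - t) + (1 - m1 - m2 + t) = 1; ring

/-- Basic Lemma (first characterization): the set `A` of quintuples
`(Pr, Sp₁, Se₁, Sp₂, Se₂)` compatible with `q` is nonempty and is characterized
by the four relations (1)-(4). -/
theorem stmt_6 (q : Fin 2 × Fin 2 → ℝ) (hq : IsProb q) :
    Set.Nonempty {x : ℝ × ℝ × ℝ × ℝ × ℝ |
        ∃ π : Fin 2 → ℝ, ∃ χ : Fin 2 → Fin 2 × Fin 2 → ℝ,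
          IsProb π ∧ IsMarkov χ ∧ mu2 π χ = q ∧
          x = (π 1, chi1 χ 0 0, chi1 χ 1 1, chi2 χ 0 0, chi2 χ 1 1)} ∧
    {x : ℝ × ℝ × ℝ × ℝ × ℝ |
        ∃ π : Fin 2 → ℝ, ∃ χ : Fin 2 → Fin 2 × Fin 2 → ℝ,
          IsProb π ∧ IsMarkov χ ∧ mu2 π χ = q ∧
          x = (π 1, chi1 χ 0 0, chi1 χ 1 1, chi2 χ 0 0, chi2 χ 1 1)} =
    {x : ℝ × ℝ × ℝ × ℝ × ℝ |
        x.1 ∈ Set.Icc (0:ℝ) 1 ∧ x.2.1 ∈ Set.Icc (0:ℝ) 1 ∧ x.2.2.1 ∈ Set.Icc (0:ℝ) 1 ∧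
        x.2.2.2.1 ∈ Set.Icc (0:ℝ) 1 ∧ x.2.2.2.2 ∈ Set.Icc (0:ℝ) 1 ∧
        (1 - x.1) * (1 - x.2.1) + x.1 * x.2.2.1 = q (1, 0) + q (1, 1) ∧
        (1 - x.1) * (1 - x.2.2.2.1) + x.1 * x.2.2.2.2 = q (0, 1) + q (1, 1) ∧
        q (0, 0) ≤ (1 - x.1) * min x.2.1 x.2.2.2.1 + x.1 * (1 - max x.2.2.1 x.2.2.2.2) ∧
        (1 - x.1) * max (x.2.1 + x.2.2.2.1 - 1) 0 + x.1 * max (1 - x.2.2.1 - x.2.2.2.2) 0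
          ≤ q (0, 0)} := by
  have hsum : q (0,0) + q (0,1) + q (1,0) + q (1,1) = 1 := by
    have h := hq.2; rwa [sum_prod2] at h
  constructor
  · -- Nonemptiness
    refine ⟨_, ![1,0], fun _ => q, ⟨?_, ?_⟩, fun _ => hq, ?_, rfl⟩
    · intro i; fin_cases i <;> norm_num
    · rw [Fin.sum_univ_two]; norm_num
    · funext j; simp [mu2, Fin.sum_univ_two]
  · ext x
    obtain ⟨p, Sp1, Se1, Sp2, Se2⟩ := x
    simp only [Set.mem_setOf_eq, Set.mem_Icc]
    constructor
    · -- forward inclusion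
      rintro ⟨π, χ, hπ, hχ, hμ, hx⟩
      obtain ⟨hxp, hx1, hx2, hx3, hx4⟩ :
          p = π 1 ∧ Sp1 = chi1 χ 0 0 ∧ Se1 = chi1 χ 1 1 ∧ Sp2 = chi2 χ 0 0 ∧ Se2 = chi2 χ 1 1 := by
        simpa [Prod.ext_iff] using hx
      subst hxp hx1 hx2 hx3 hx4
      simp only [chi1, chi2]
      have hπ2 : π 0 + π 1 = 1 := by have h := hπ.2; rwa [Fin.sum_univ_two] at h
      have hπ0 : 0 ≤ π 0 := (hπ.1 0).1
      have hπ1 : 0 ≤ π 1 := (hπ.1 1).1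
      obtain ⟨hA, hAs⟩ := hχ 0
      obtain ⟨hB, hBs⟩ := hχ 1
      rw [sum_prod2] at hAs hBs
      have e00 : π 0 * χ 0 (0,0) + π 1 * χ 1 (0,0) = q (0,0) := by
        have h := congrFun hμ (0,0); simpa [mu2, Fin.sum_univ_two] using h
      have e01 : π 0 * χ 0 (0,1) + π 1 * χ 1 (0,1) = q (0,1) := by
        have h := congrFun hμ (0,1); simpa [mu2, Fin.sum_univ_two] using h
      have e10 : π 0 * χ 0 (1,0) + π 1 * χ 1 (1,0) = q (1,0) := by
        have h := congrFun hμ (1,0); simpa [mu2, Fin.sum_univ_two] using h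
      have e11 : π 0 * χ 0 (1,1) + π 1 * χ 1 (1,1) = q (1,1) := by
        have h := congrFun hμ (1,1); simpa [mu2, Fin.sum_univ_two] using h
      have hπ0e : (1:ℝ) - π 1 = π 0 := by linarith
      refine ⟨⟨hπ1, (hπ.1 1).2⟩, ?_, ?_, ?_, ?_, ?_, ?_, ?_, ?_⟩
      · constructor
        · linarith [(hA (0,0)).1, (hA (0,1)).1]
        · linarith [(hA (1,0)).1, (hA (1,1)).1]
      · constructor
        · linarith [(hB (1,0)).1, (hB (1,1)).1]
        · linarith [(hB (0,0)).1, (hB (0,1)).1]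
      · constructor
        · linarith [(hA (0,0)).1, (hA (1,0)).1]
        · linarith [(hA (0,1)).1, (hA (1,1)).1]
      · constructor
        · linarith [(hB (0,1)).1, (hB (1,1)).1]
        · linarith [(hB (0,0)).1, (hB (1,0)).1]
      · rw [hπ0e]; linear_combination e10 + e11 - π 0 * hAs
      · rw [hπ0e]; linear_combination e01 + e11 - π 0 * hAs
      · rw [hπ0e]
        have k1 : χ 0 (0,0) ≤ min (χ 0 (0,0) + χ 0 (0,1)) (χ 0 (0,0) + χ 0 (1,0)) :=
          le_min (by linarith [(hA (0,1)).1]) (by linarith [(hA (1,0)).1])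
        have k2 : χ 1 (0,0) ≤ 1 - max (χ 1 (1,0) + χ 1 (1,1)) (χ 1 (0,1) + χ 1 (1,1)) := by
          have hm : max (χ 1 (1,0) + χ 1 (1,1)) (χ 1 (0,1) + χ 1 (1,1)) ≤ 1 - χ 1 (0,0) :=
            max_le (by linarith [(hB (0,1)).1]) (by linarith [(hB (1,0)).1])
          linarith
        have t1 := mul_le_mul_of_nonneg_left k1 hπ0
        have t2 := mul_le_mul_of_nonneg_left k2 hπ1
        linarith
      · rw [hπ0e]
        have k3 : max (χ 0 (0,0) + χ 0 (0,1) + (χ 0 (0,0) + χ 0 (1,0)) - 1) 0 ≤ χ 0 (0,0) :=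
          max_le (by linarith [(hA (1,1)).1]) (hA (0,0)).1
        have k4 : max (1 - (χ 1 (1,0) + χ 1 (1,1)) - (χ 1 (0,1) + χ 1 (1,1))) 0 ≤ χ 1 (0,0) :=
          max_le (by linarith [(hB (1,1)).1]) (hB (0,0)).1
        have t3 := mul_le_mul_of_nonneg_left k3 hπ0
        have t4 := mul_le_mul_of_nonneg_left k4 hπ1
        linarith
    · -- reverse inclusion
      rintro ⟨⟨hp0, hp1⟩, ⟨hS10, hS11⟩, ⟨hE10, hE11⟩, ⟨hS20, hS21⟩, ⟨hE20, hE21⟩, h1, h2, h3, h4⟩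
      set L0 := max (Sp1 + Sp2 - 1) 0 with hL0def
      set U0 := min Sp1 Sp2 with hU0def
      set L1 := max (1 - Se1 - Se2) 0 with hL1def
      set U1 := 1 - max Se1 Se2 with hU1def
      set lo := (1 - p) * L0 + p * L1 with hlodef
      set hi := (1 - p) * U0 + p * U1 with hhidef
      have hL0U0 : L0 ≤ U0 := max_le (le_min (by linarith) (by linarith)) (le_min hS10 hS20)
      have hL1U1 : L1 ≤ U1 := by
        have hm1 : max Se1 Se2 ≤ Se1 + Se2 := max_le (by linarith) (by linarith)
        have hm2 : max Se1 Se2 ≤ 1 := max_le hE11 hE21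
        exact max_le (by rw [hU1def]; linarith) (by rw [hU1def]; linarith)
      have hlohi : lo ≤ hi := by
        have u1 := mul_le_mul_of_nonneg_left hL0U0 (by linarith : (0:ℝ) ≤ 1 - p)
        have u2 := mul_le_mul_of_nonneg_left hL1U1 hp0
        rw [hlodef, hhidef]; linarith
      obtain ⟨s, hs0, hs1, hseq⟩ : ∃ s : ℝ, 0 ≤ s ∧ s ≤ 1 ∧ lo + s * (hi - lo) = q (0,0) := by
        rcases eq_or_lt_of_le hlohi with he | hlt
        · exact ⟨0, le_refl 0, zero_le_one, by rw [← he] at h3 ⊢; linarith⟩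
        · refine ⟨(q (0,0) - lo) / (hi - lo), div_nonneg (by linarith) (by linarith), ?_, ?_⟩
          · rw [div_le_one (by linarith)]; linarith
          · rw [div_mul_cancel₀ _ (ne_of_gt (by linarith : (0:ℝ) < hi - lo))]; ring
      set t0 := L0 + s * (U0 - L0) with ht0def
      set t1 := L1 + s * (U1 - L1) with ht1def
      have ht0l : L0 ≤ t0 := by
        have h := mul_nonneg hs0 (sub_nonneg.2 hL0U0); linarith
      have ht0u : t0 ≤ U0 := by
        have h := mul_le_mul_of_nonneg_right hs1 (sub_nonneg.2 hL0U0)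
        rw [one_mul] at h; linarith
      have ht1l : L1 ≤ t1 := by
        have h := mul_nonneg hs0 (sub_nonneg.2 hL1U1); linarith
      have ht1u : t1 ≤ U1 := by
        have h := mul_le_mul_of_nonneg_right hs1 (sub_nonneg.2 hL1U1)
        rw [one_mul] at h; linarith
      have h00 : (1 - p) * t0 + p * t1 = q (0,0) := by
        rw [← hseq, ht0def, ht1def, hlodef, hhidef]; ring
      have hminmax : min (1 - Se1) (1 - Se2) = 1 - max Se1 Se2 := by
        rcases le_total Se1 Se2 with h | h
        · rw [max_eq_right h, min_eq_right (by linarith)]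
        · rw [max_eq_left h, min_eq_left (by linarith)]
      refine ⟨![1 - p, p], ![J Sp1 Sp2 t0, J (1 - Se1) (1 - Se2) t1], ⟨?_, ?_⟩, ?_, ?_, ?_⟩
      · intro i
        fin_cases i <;>
          simp only [Fin.mk_zero, Fin.mk_one, Matrix.cons_val_zero, Matrix.cons_val_one, Matrix.head_cons] <;>
          constructor <;> linarith
      · rw [Fin.sum_univ_two]
        simp only [Fin.mk_zero, Fin.mk_one, Matrix.cons_val_zero, Matrix.cons_val_one, Matrix.head_cons]; ring
      · intro i
        fin_cases i <;>
          simp only [Fin.mk_zero, Fin.mk_one, Matrix.cons_val_zero, Matrix.cons_val_one, Matrix.head_cons]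
        · exact J_isProb hS10 hS11 hS20 hS21 (hL0def ▸ ht0l) (hU0def ▸ ht0u)
        · refine J_isProb (by linarith) (by linarith) (by linarith) (by linarith) ?_ ?_
          · rw [show (1 - Se1) + (1 - Se2) - 1 = 1 - Se1 - Se2 by ring]
            exact hL1def ▸ ht1l
          · rw [hminmax]; exact hU1def ▸ ht1u
      · funext j
        obtain ⟨a, b⟩ := j
        have hgoal : ∀ j : Fin 2 × Fin 2,
            mu2 ![1 - p, p] ![J Sp1 Sp2 t0, J (1 - Se1) (1 - Se2) t1] j
              = (1 - p) * J Sp1 Sp2 t0 j + p * J (1 - Se1) (1 - Se2) t1 j := by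
          intro j
          simp [mu2, Fin.sum_univ_two]
        fin_cases a <;> fin_cases b <;> rw [hgoal]
        · show (1 - p) * t0 + p * t1 = q (0,0)
          exact h00
        · show (1 - p) * (Sp1 - t0) + p * (1 - Se1 - t1) = q (0,1)
          linear_combination -h00 - h1 - hsum
        · show (1 - p) * (Sp2 - t0) + p * (1 - Se2 - t1) = q (1,0)
          linear_combination -h00 - h2 - hsum
        · show (1 - p) * (1 - Sp1 - Sp2 + t0) + p * (1 - (1 - Se1) - (1 - Se2) + t1) = q (1,1)
          linear_combination h00 + h1 + h2 + hsum
      · simp only [chi1, chi2, Matrix.cons_val_zero, Matrix.cons_val_one, Matrix.head_cons,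
          Prod.mk.injEq]
        refine ⟨trivial, ?_, ?_, ?_, ?_⟩
        · show Sp1 = t0 + (Sp1 - t0); ring
        · show Se1 = (1 - Se2) - t1 + (1 - (1 - Se1) - (1 - Se2) + t1); ring
        · show Sp2 = t0 + (Sp2 - t0); ring
        · show Se2 = (1 - Se1) - t1 + (1 - (1 - Se1) - (1 - Se2) + t1); ring

end
end

section
/- Basic Lemma (equivalence of the two systems of conditions). Let q ∈ Prob({0,1}²) and (Pr, Sp₁, Se₁, Sp₂, Se₂) ∈ [0,1]⁵. Then the system of four relations: (1−Pr)·(1−Sp₁) + Pr·Se₁ = q_{1+}; (1−Pr)·(1−Sp₂) + Pr·Se₂ = q_{+1}; (1−Pr)·min(Sp₁,Sp₂) + Pr·(1 − max(Se₁,Se₂)) ≥ q₀₀; (1−Pr)·max(Sp₁+Sp₂−1, 0) + Pr·max(1−Se₁−Se₂, 0) ≤ q₀₀, holds if and only if the system of four relations: Pr·(Se₂−Se₁) = (1−Pr)·(Sp₂−Sp₁) + q₀₁ − q₁₀; Pr·(Se₁+Se₂−1) = (1−Pr)·(Sp₁+Sp₂−1) + q₁₁ − q₀₀; −q₁₀ ≤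 Pr·(Se₂−Se₁) ≤ q₀₁; −q₀₀ ≤ Pr·(Se₁+Se₂−1) ≤ q₁₁, holds. -/
open scoped BigOperators

noncomputable section

set_option maxHeartbeats 2000000 in
/-- Basic Lemma (equivalence of the two systems of conditions). -/
theorem stmt_7 (q : Fin 2 × Fin 2 → ℝ) (hq : IsProb q)
    (Pr Sp₁ Se₁ Sp₂ Se₂ : ℝ)
    (hPr : Pr ∈ Set.Icc (0:ℝ) 1) (hSp₁ : Sp₁ ∈ Set.Icc (0:ℝ) 1)
    (hSe₁ : Se₁ ∈ Set.Icc (0:ℝ) 1) (hSp₂ : Sp₂ ∈ Set.Icc (0:ℝ) 1)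
    (hSe₂ : Se₂ ∈ Set.Icc (0:ℝ) 1) :
    ((1 - Pr) * (1 - Sp₁) + Pr * Se₁ = q (1, 0) + q (1, 1) ∧
     (1 - Pr) * (1 - Sp₂) + Pr * Se₂ = q (0, 1) + q (1, 1) ∧
     q (0, 0) ≤ (1 - Pr) * min Sp₁ Sp₂ + Pr * (1 - max Se₁ Se₂) ∧
     (1 - Pr) * max (Sp₁ + Sp₂ - 1) 0 + Pr * max (1 - Se₁ - Se₂) 0 ≤ q (0, 0)) ↔
    (Pr * (Se₂ - Se₁) = (1 - Pr) * (Sp₂ - Sp₁) + q (0, 1) - q (1, 0) ∧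
     Pr * (Se₁ + Se₂ - 1) = (1 - Pr) * (Sp₁ + Sp₂ - 1) + q (1, 1) - q (0, 0) ∧
     -q (1, 0) ≤ Pr * (Se₂ - Se₁) ∧ Pr * (Se₂ - Se₁) ≤ q (0, 1) ∧
     -q (0, 0) ≤ Pr * (Se₁ + Se₂ - 1) ∧ Pr * (Se₁ + Se₂ - 1) ≤ q (1, 1)) := by
  obtain ⟨hpos, hsum⟩ := hq
  rw [Fintype.sum_prod_type, Fin.sum_univ_two, Fin.sum_univ_two, Fin.sum_univ_two] at hsum
  obtain ⟨h00, _⟩ := hpos (0, 0)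
  obtain ⟨h01, _⟩ := hpos (0, 1)
  obtain ⟨h10, _⟩ := hpos (1, 0)
  obtain ⟨h11, _⟩ := hpos (1, 1)
  obtain ⟨hPr0, hPr1⟩ := hPr
  obtain ⟨hSp₁0, hSp₁1⟩ := hSp₁
  obtain ⟨hSe₁0, hSe₁1⟩ := hSe₁
  obtain ⟨hSp₂0, hSp₂1⟩ := hSp₂
  obtain ⟨hSe₂0, hSe₂1⟩ := hSe₂
  rcases le_total Sp₁ Sp₂ with hsp | hsp <;>
    rcases le_total Se₁ Se₂ with hse | hse <;>
    rcases le_total (Sp₁ + Sp₂ - 1) 0 with hsps | hsps <;>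
    rcases le_total (1 - Se₁ - Se₂) 0 with hses | hses <;>
  simp only [min_eq_left hsp, min_eq_right hsp, max_eq_right hse, max_eq_left hse,
    max_eq_left hsps, max_eq_right hsps, max_eq_left hses, max_eq_right hses] <;>
  (have Hv := mul_le_mul_of_nonneg_left hsp (by linarith : (0:ℝ) ≤ 1 - Pr)
   have Hu := mul_le_mul_of_nonneg_left hse hPr0
   have Hz := mul_le_mul_of_nonneg_left hsps (by linarith : (0:ℝ) ≤ 1 - Pr)
   have Hw := mul_le_mul_of_nonneg_left hses hPr0
   constructor
   · rintro ⟨a1, a2, a3, a4⟩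
     refine ⟨by linarith, by linarith, by linarith, by linarith, by linarith, by linarith⟩
   · rintro ⟨b1, b2, b3, b4, b5, b6⟩
     refine ⟨by linarith, by linarith, by linarith, by linarith⟩)

end
end

section
/- Lemma (set B). Let q ∈ Prob({0,1}²) and μ := μ₂. Then the set B := {(π₁, χ^{(1)}_{1|1}, χ^{(2)}_{1|1}) : (π,χ) ∈ Θ₂, μ(π,χ) = q} is nonempty and equals the set of all (Pr, Se₁, Se₂) ∈ [0,1]³ satisfying: −q₁₀ ≤ Pr·(Se₂−Se₁) ≤ q₀₁; −q₀₀ ≤ Pr·(Se₁+Se₂−1) ≤ q₁₁; Pr − q_{0+} ≤ Pr·Se₁ ≤ q_{1+}; and Pr − q_{+0} ≤ Pr·Se₂ ≤ q_{+1}. -/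
open scoped BigOperators

noncomputable section

/-! A pair `(π, χ)` with `μ₂(π, χ) = q` is the same thing as a density `c = χ_{·|1}` with
`π₁ c ≤ q` pointwise: the other component `χ_{·|0} = (q - π₁ c) / (1 - π₁)` is then forced when `π₁ < 1`.
So `B` is the set of `(π₁, marginals of c)`. Writing `a = π₁ c`, the table `a ≤ q` with prescribed
total mass `π₁` and margins `S = π₁ Se₁`, `T = π₁ Se₂` has one free entry `v = a₁₁`, whose four
lower bounds `0, S - q₁₀, T - q₀₁, S + T - π₁` and four upper bounds `q₁₁, S, T, q₀₀ + S + T - π₁`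
are pairwise compatible exactly under the stated inequalities. -/

open Finset

theorem IsProb.of_nonneg {X : Type*} [Fintype X] {p : X → ℝ} (h0 : ∀ x, 0 ≤ p x)
    (h1 : ∑ x, p x = 1) : IsProb p :=
  ⟨fun x => ⟨h0 x, h1 ▸ single_le_sum (fun y _ => h0 y) (mem_univ x)⟩, h1⟩

theorem isProb_pair {t : ℝ} (ht : t ∈ Set.Icc (0 : ℝ) 1) : IsProb ![1 - t, t] :=
  IsProb.of_nonneg (Fin.forall_fin_two.2 ⟨by simpa using ht.2, ht.1⟩) (by simp)

theorem sum_fin_two_prod {M : Type*} [AddCommMonoid M] (c : Fin 2 × Fin 2 → M) :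
    ∑ j, c j = c (0, 0) + c (0, 1) + (c (1, 0) + c (1, 1)) := by
  simp [Fintype.sum_prod_type, Fin.sum_univ_two]

theorem mul_le_sum_mul_of_isProb {X Y : Type*} [Fintype X] [Fintype Y] {π : X → ℝ}
    {χ : X → Y → ℝ} (hπ : IsProb π) (hχ : IsMarkov χ) (i : X) (y : Y) :
    π i * χ i y ≤ ∑ k, π k * χ k y :=
  single_le_sum (fun k _ => mul_nonneg (hπ.1 k).1 ((hχ k).1 y).1) (mem_univ i)

theorem exists_isMarkov_mixture {Y : Type*} [Fintype Y] {q c : Y → ℝ} {p : ℝ}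
    (hq : IsProb q) (hc : IsProb c) (hp : p ∈ Set.Icc (0 : ℝ) 1) (hcq : ∀ y, p * c y ≤ q y) :
    ∃ χ : Fin 2 → Y → ℝ, IsMarkov χ ∧ χ 1 = c ∧ ∀ y, ∑ i, ![1 - p, p] i * χ i y = q y := by
  rcases eq_or_ne p 1 with rfl | hp1
  · have hcq' : c = q := funext fun y =>
      (sum_eq_sum_iff_of_le fun y _ => by simpa using hcq y).1 (hc.2.trans hq.2.symm) y (mem_univ y)
    exact ⟨![c, c], Fin.forall_fin_two.2 ⟨hc, hc⟩, rfl, fun y => by simp [hcq']⟩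
  · have h1p : 0 < 1 - p := sub_pos.2 (lt_of_le_of_ne hp.2 hp1)
    refine ⟨![fun y => (q y - p * c y) / (1 - p), c], Fin.forall_fin_two.2 ⟨?_, hc⟩, rfl,
      fun y => ?_⟩
    · refine IsProb.of_nonneg (fun y => div_nonneg (sub_nonneg.2 (hcq y)) h1p.le) ?_
      show ∑ y, (q y - p * c y) / (1 - p) = 1
      rw [← sum_div, sum_sub_distrib, ← mul_sum, hq.2, hc.2, mul_one, div_self h1p.ne']
    · simp only [Fin.sum_univ_two, Matrix.cons_val_zero, Matrix.cons_val_one]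
      field_simp
      ring

theorem exists_mixture_iff {q : Fin 2 × Fin 2 → ℝ} (hq : IsProb q) {p s₁ s₂ : ℝ} :
    (∃ π : Fin 2 → ℝ, ∃ χ : Fin 2 → Fin 2 × Fin 2 → ℝ,
      IsProb π ∧ IsMarkov χ ∧ mu2 π χ = q ∧ (p, s₁, s₂) = (π 1, chi1 χ 1 1, chi2 χ 1 1)) ↔
    p ∈ Set.Icc (0 : ℝ) 1 ∧ ∃ c : Fin 2 × Fin 2 → ℝ, IsProb c ∧ (∀ j, p * c j ≤ q j) ∧
      c (1, 0) + c (1, 1) = s₁ ∧ c (0, 1) + c (1, 1) = s₂ := by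
  constructor
  · rintro ⟨π, χ, hπ, hχ, rfl, h⟩
    obtain ⟨rfl, rfl, rfl⟩ : p = π 1 ∧ s₁ = chi1 χ 1 1 ∧ s₂ = chi2 χ 1 1 := by
      simpa only [Prod.mk.injEq] using h
    exact ⟨hπ.1 1, χ 1, hχ 1, mul_le_sum_mul_of_isProb hπ hχ 1, rfl, rfl⟩
  · rintro ⟨hp, c, hc, hcq, rfl, rfl⟩
    obtain ⟨χ, hχ, rfl, hmix⟩ := exists_isMarkov_mixture hq hc hp hcq
    exact ⟨![1 - p, p], χ, isProb_pair hp, hχ, funext hmix, rfl⟩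

def SatisfiesBounds (q : Fin 2 × Fin 2 → ℝ) (p s₁ s₂ : ℝ) : Prop :=
  p ∈ Set.Icc (0 : ℝ) 1 ∧ s₁ ∈ Set.Icc (0 : ℝ) 1 ∧ s₂ ∈ Set.Icc (0 : ℝ) 1 ∧
    -q (1, 0) ≤ p * (s₂ - s₁) ∧ p * (s₂ - s₁) ≤ q (0, 1) ∧
    -q (0, 0) ≤ p * (s₁ + s₂ - 1) ∧ p * (s₁ + s₂ - 1) ≤ q (1, 1) ∧
    p - (q (0, 0) + q (0, 1)) ≤ p * s₁ ∧ p * s₁ ≤ q (1, 0) + q (1, 1) ∧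
    p - (q (0, 0) + q (1, 0)) ≤ p * s₂ ∧ p * s₂ ≤ q (0, 1) + q (1, 1)

theorem satisfiesBounds_of_mul_le {q c : Fin 2 × Fin 2 → ℝ} {p : ℝ}
    (hp : p ∈ Set.Icc (0 : ℝ) 1) (hc : IsProb c) (hcq : ∀ j, p * c j ≤ q j) :
    SatisfiesBounds q p (c (1, 0) + c (1, 1)) (c (0, 1) + c (1, 1)) := by
  have hc₀ : ∀ j, 0 ≤ c j := fun j => (hc.1 j).1
  have hpc : ∀ j, 0 ≤ p * c j := fun j => mul_nonneg hp.1 (hc₀ j)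
  have hsum : c (0, 0) + c (0, 1) + (c (1, 0) + c (1, 1)) = 1 := sum_fin_two_prod c ▸ hc.2
  have hpsum : p * c (0, 0) + p * c (0, 1) + (p * c (1, 0) + p * c (1, 1)) = p := by
    linear_combination p * hsum
  refine ⟨hp, ⟨?_, ?_⟩, ⟨?_, ?_⟩, ?_, ?_, ?_, ?_, ?_, ?_, ?_, ?_⟩ <;>
    linarith [hcq (0, 0), hcq (0, 1), hcq (1, 0), hcq (1, 1), hpc (0, 0), hpc (0, 1),
      hpc (1, 0), hpc (1, 1), hc₀ (0, 0), hc₀ (0, 1), hc₀ (1, 0), hc₀ (1, 1)]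

theorem exists_le_of_marginals {q : Fin 2 × Fin 2 → ℝ} {p S T : ℝ} (hq : ∀ j, 0 ≤ q j)
    (hS : S ∈ Set.Icc 0 p) (hT : T ∈ Set.Icc 0 p)
    (h₁ : -q (1, 0) ≤ T - S) (h₂ : T - S ≤ q (0, 1))
    (h₃ : -q (0, 0) ≤ S + T - p) (h₄ : S + T - p ≤ q (1, 1))
    (h₅ : p - (q (0, 0) + q (0, 1)) ≤ S) (h₆ : S ≤ q (1, 0) + q (1, 1))
    (h₇ : p - (q (0, 0) + q (1, 0)) ≤ T) (h₈ : T ≤ q (0, 1) + q (1, 1)) :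
    ∃ a : Fin 2 × Fin 2 → ℝ, (∀ j, 0 ≤ a j ∧ a j ≤ q j) ∧ ∑ j, a j = p ∧
      a (1, 0) + a (1, 1) = S ∧ a (0, 1) + a (1, 1) = T := by
  have hq₀₀ := hq (0, 0); have hq₀₁ := hq (0, 1); have hq₁₀ := hq (1, 0); have hq₁₁ := hq (1, 1)
  set v := max (max 0 (S - q (1, 0))) (max (T - q (0, 1)) (S + T - p))
  have hv : 0 ≤ v ∧ S - q (1, 0) ≤ v ∧ T - q (0, 1) ≤ v ∧ S + T - p ≤ v := by
    simp only [v, le_max_iff, le_refl, true_or, or_true, and_self]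
  have hv' : v ≤ q (1, 1) ∧ v ≤ S ∧ v ≤ T ∧ v ≤ q (0, 0) + S + T - p := by
    refine ⟨?_, ?_, ?_, ?_⟩ <;>
      exact max_le (max_le (by linarith [hS.1, hT.1]) (by linarith))
        (max_le (by linarith) (by linarith [hS.2, hT.2]))
  refine ⟨fun j => ![![p - S - T + v, T - v], ![S - v, v]] j.1 j.2, ?_, ?_, ?_, ?_⟩
  · simp only [Prod.forall, Fin.forall_fin_two, Matrix.cons_val_zero, Matrix.cons_val_one]
    refine ⟨⟨⟨?_, ?_⟩, ?_, ?_⟩, ⟨?_, ?_⟩, ?_, ?_⟩ <;> linarith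
  · simp only [sum_fin_two_prod, Matrix.cons_val_zero, Matrix.cons_val_one]
    ring
  · simp only [Matrix.cons_val_zero, Matrix.cons_val_one]
    ring
  · simp only [Matrix.cons_val_zero, Matrix.cons_val_one]
    ring

theorem exists_isProb_of_satisfiesBounds {q : Fin 2 × Fin 2 → ℝ} {p s₁ s₂ : ℝ}
    (hq : ∀ j, 0 ≤ q j) (h : SatisfiesBounds q p s₁ s₂) :
    ∃ c : Fin 2 × Fin 2 → ℝ, IsProb c ∧ (∀ j, p * c j ≤ q j) ∧
      c (1, 0) + c (1, 1) = s₁ ∧ c (0, 1) + c (1, 1) = s₂ := by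
  obtain ⟨hp, hs₁, hs₂, h₁, h₂, h₃, h₄, h₅, h₆, h₇, h₈⟩ := h
  rcases hp.1.eq_or_lt with rfl | hp₀
  · have hprod : ∀ j : Fin 2 × Fin 2, 0 ≤ ![1 - s₁, s₁] j.1 * ![1 - s₂, s₂] j.2 := fun j =>
      mul_nonneg ((isProb_pair hs₁).1 j.1).1 ((isProb_pair hs₂).1 j.2).1
    refine ⟨_, IsProb.of_nonneg hprod ?_, fun j => by simpa using hq j, ?_, ?_⟩ <;>
      simp only [sum_fin_two_prod, Matrix.cons_val_zero, Matrix.cons_val_one] <;> ring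
  · obtain ⟨a, ha, hsum, ha₁, ha₂⟩ := exists_le_of_marginals (S := p * s₁) (T := p * s₂) hq
      ⟨mul_nonneg hp.1 hs₁.1, mul_le_of_le_one_right hp.1 hs₁.2⟩
      ⟨mul_nonneg hp.1 hs₂.1, mul_le_of_le_one_right hp.1 hs₂.2⟩
      (by linarith) (by linarith) (by linarith) (by linarith) h₅ h₆ h₇ h₈
    refine ⟨fun j => a j / p, IsProb.of_nonneg (fun j => div_nonneg (ha j).1 hp₀.le) ?_,
      fun j => (mul_div_cancel₀ _ hp₀.ne').le.trans (ha j).2, ?_, ?_⟩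
    · rw [← sum_div, hsum, div_self hp₀.ne']
    · rw [← add_div, ha₁, mul_div_cancel_left₀ _ hp₀.ne']
    · rw [← add_div, ha₂, mul_div_cancel_left₀ _ hp₀.ne']

/-- Lemma (set B): the set of triples `(Pr, Se₁, Se₂)` compatible with `q`. -/
theorem stmt_8 (q : Fin 2 × Fin 2 → ℝ) (hq : IsProb q) :
    Set.Nonempty {x : ℝ × ℝ × ℝ |
        ∃ π : Fin 2 → ℝ, ∃ χ : Fin 2 → Fin 2 × Fin 2 → ℝ,
          IsProb π ∧ IsMarkov χ ∧ mu2 π χ = q ∧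
          x = (π 1, chi1 χ 1 1, chi2 χ 1 1)} ∧
    {x : ℝ × ℝ × ℝ |
        ∃ π : Fin 2 → ℝ, ∃ χ : Fin 2 → Fin 2 × Fin 2 → ℝ,
          IsProb π ∧ IsMarkov χ ∧ mu2 π χ = q ∧
          x = (π 1, chi1 χ 1 1, chi2 χ 1 1)} =
    {x : ℝ × ℝ × ℝ |
        x.1 ∈ Set.Icc (0:ℝ) 1 ∧ x.2.1 ∈ Set.Icc (0:ℝ) 1 ∧ x.2.2 ∈ Set.Icc (0:ℝ) 1 ∧
        -q (1, 0) ≤ x.1 * (x.2.2 - x.2.1) ∧ x.1 * (x.2.2 - x.2.1) ≤ q (0, 1) ∧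
        -q (0, 0) ≤ x.1 * (x.2.1 + x.2.2 - 1) ∧ x.1 * (x.2.1 + x.2.2 - 1) ≤ q (1, 1) ∧
        x.1 - (q (0, 0) + q (0, 1)) ≤ x.1 * x.2.1 ∧ x.1 * x.2.1 ≤ q (1, 0) + q (1, 1) ∧
        x.1 - (q (0, 0) + q (1, 0)) ≤ x.1 * x.2.2 ∧ x.1 * x.2.2 ≤ q (0, 1) + q (1, 1)} := by
  refine ⟨⟨_, (exists_mixture_iff hq).2 ⟨⟨le_rfl, zero_le_one⟩, q, hq,
    fun j => by simpa using (hq.1 j).1, rfl, rfl⟩⟩, ?_⟩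
  ext ⟨p, s₁, s₂⟩
  change _ ↔ SatisfiesBounds q p s₁ s₂
  rw [Set.mem_ofPred_eq, exists_mixture_iff hq]
  constructor
  · rintro ⟨hp, c, hc, hcq, rfl, rfl⟩
    exact satisfiesBounds_of_mul_le hp hc hcq
  · intro h
    exact ⟨h.1, exists_isProb_of_satisfiesBounds (fun j => (hq.1 j).1) h⟩

end
end

section
/- Lemma (set D). Let q ∈ Prob({0,1}²) and μ := μ₂. Then the set D := {(π₁, χ^{(1)}_{1|1}) : (π,χ) ∈ Θ₂, μ(π,χ) = q} is nonempty and equals the set of all (Pr, Se₁) ∈ [0,1]² satisfying Pr − q_{0+} ≤ Pr·Se₁ ≤ q_{1+}. -/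
open scoped BigOperators

noncomputable section

/-!
Write `P = π₁` and `s = χ^{(1)}_{·|1}`. The constraint `μ(π,χ) = q` says
`q = (1 - P) χ_{·|0} + P χ_{·|1}`, and summing over the second test gives `P s_x ≤ q_{x+}` for
`x = 0, 1`: these are the two inequalities defining the set. Conversely, given such `P` and `s`,
split each `s_x` over the second test in proportion to `q_{x0} : q_{x1}`; the resulting row
`χ_{·|1}` satisfies `P χ_{·|1} ≤ q`, and the residual `q - P χ_{·|1}`, of mass `1 - P`,
normalizes to a row `χ_{·|0}`.
-/

open Finset

namespace IsProb

variable {X Y : Type*} [Fintype X] [Fintype Y] {p : X → ℝ}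

lemma nonneg_s10 (hp : IsProb p) (x : X) : 0 ≤ p x := (hp.1 x).1

lemma le_one (hp : IsProb p) (x : X) : p x ≤ 1 := (hp.1 x).2

lemma sum_eq_one (hp : IsProb p) : ∑ x, p x = 1 := hp.2

lemma of_nonneg_of_sum_eq_one (h0 : ∀ x, 0 ≤ p x) (h1 : ∑ x, p x = 1) : IsProb p :=
  ⟨fun x => ⟨h0 x, h1 ▸ single_le_sum (fun y _ => h0 y) (mem_univ x)⟩, h1⟩

lemma marginal_fst {p : X × Y → ℝ} (hp : IsProb p) : IsProb fun x => ∑ y, p (x, y) :=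
  of_nonneg_of_sum_eq_one (fun _ => sum_nonneg fun y _ => hp.nonneg_s10 _)
    (by rw [← Fintype.sum_prod_type', hp.sum_eq_one])

lemma vecCons_one_sub {t : ℝ} (h0 : 0 ≤ t) (h1 : t ≤ 1) : IsProb ![1 - t, t] :=
  of_nonneg_of_sum_eq_one (Fin.forall_fin_two.2 ⟨sub_nonneg.2 h1, h0⟩) (by simp)

end IsProb

section Mixture

variable {X Y : Type*} [Fintype X] [Fintype Y]

lemma exists_isProb_mul_eq [Nonempty X] {r : X → ℝ} (hr : ∀ x, 0 ≤ r x) :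
    ∃ ρ : X → ℝ, IsProb ρ ∧ ∀ x, (∑ x', r x') * ρ x = r x := by
  classical
  obtain hzero | hpos := (sum_nonneg fun x _ => hr x).eq_or_lt
  · obtain ⟨x₀⟩ := ‹Nonempty X›
    have hr0 : ∀ x, r x = 0 := fun x =>
      (sum_eq_zero_iff_of_nonneg fun x _ => hr x).1 hzero.symm x (mem_univ x)
    refine ⟨Pi.single x₀ 1, .of_nonneg_of_sum_eq_one (fun x => ?_) (by simp), fun x => ?_⟩
    · by_cases hx : x = x₀ <;> simp [hx]
    · rw [← hzero, zero_mul, hr0]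
  · refine ⟨fun x => r x / ∑ x', r x',
      .of_nonneg_of_sum_eq_one (fun x => div_nonneg (hr x) hpos.le) ?_,
      fun x => mul_div_cancel₀ _ hpos.ne'⟩
    rw [← sum_div, div_self hpos.ne']

lemma exists_isProb_marginal_fst_eq_of_mul_le [Nonempty Y] {q : X × Y → ℝ} (hq : ∀ j, 0 ≤ q j)
    {s : X → ℝ} (hs : IsProb s) {P : ℝ} (hsq : ∀ x, P * s x ≤ ∑ y, q (x, y)) :
    ∃ χ : X × Y → ℝ, IsProb χ ∧ (∀ x, ∑ y, χ (x, y) = s x) ∧ ∀ j, P * χ j ≤ q j := by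
  choose ρ hρ hρq using fun x => exists_isProb_mul_eq (r := fun y => q (x, y)) fun y => hq _
  have hmarg : ∀ x, ∑ y, s x * ρ x y = s x := fun x => by
    rw [← mul_sum, (hρ x).sum_eq_one, mul_one]
  refine ⟨fun j => s j.1 * ρ j.1 j.2,
    .of_nonneg_of_sum_eq_one (fun j => mul_nonneg (hs.nonneg_s10 _) ((hρ _).nonneg_s10 _)) ?_,
    hmarg, fun ⟨x, y⟩ => ?_⟩
  · rw [Fintype.sum_prod_type]
    simp only [hmarg, hs.sum_eq_one]
  · calc P * (s x * ρ x y) = P * s x * ρ x y := by ring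
      _ ≤ (∑ y', q (x, y')) * ρ x y := mul_le_mul_of_nonneg_right (hsq x) ((hρ x).nonneg_s10 y)
      _ = q (x, y) := hρq x y

theorem exists_mixture_of_mul_le [Nonempty X] [Nonempty Y] {q : X × Y → ℝ} (hq : IsProb q)
    {s : X → ℝ} (hs : IsProb s) {P : ℝ} (hsq : ∀ x, P * s x ≤ ∑ y, q (x, y)) :
    ∃ χ₀ χ₁ : X × Y → ℝ, IsProb χ₀ ∧ IsProb χ₁ ∧ (∀ x, ∑ y, χ₁ (x, y) = s x) ∧
      ∀ j, (1 - P) * χ₀ j + P * χ₁ j = q j := by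
  obtain ⟨χ₁, hχ₁, hmarg, hle⟩ :=
    exists_isProb_marginal_fst_eq_of_mul_le hq.nonneg_s10 hs hsq
  obtain ⟨χ₀, hχ₀, hres⟩ := exists_isProb_mul_eq (r := fun j => q j - P * χ₁ j)
    fun j => sub_nonneg.2 (hle j)
  have hmass : ∑ j, (q j - P * χ₁ j) = 1 - P := by
    rw [sum_sub_distrib, ← mul_sum, hq.sum_eq_one, hχ₁.sum_eq_one, mul_one]
  refine ⟨χ₀, χ₁, hχ₀, hχ₁, hmarg, fun j => ?_⟩
  rw [← hmass, hres]
  ring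

end Mixture

lemma mul_sum_le_sum_of_mixture {X Y : Type*} [Fintype Y] {q χ₀ χ₁ : X × Y → ℝ}
    (hχ₀ : ∀ j, 0 ≤ χ₀ j) {P : ℝ} (hP : P ≤ 1) (hmix : ∀ j, (1 - P) * χ₀ j + P * χ₁ j = q j) (x : X) :
    P * ∑ y, χ₁ (x, y) ≤ ∑ y, q (x, y) := by
  simp only [← hmix, sum_add_distrib, ← mul_sum]
  exact le_add_of_nonneg_left (mul_nonneg (sub_nonneg.2 hP) (sum_nonneg fun y _ => hχ₀ _))

lemma chi1_eq_sum (χ : Fin 2 → Fin 2 × Fin 2 → ℝ) (i ι : Fin 2) :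
    chi1 χ i ι = ∑ y, χ i (ι, y) :=
  (Fin.sum_univ_two fun y => χ i (ι, y)).symm

lemma mu2_apply_of_isProb {π : Fin 2 → ℝ} (hπ : IsProb π) (χ : Fin 2 → Fin 2 × Fin 2 → ℝ)
    (j : Fin 2 × Fin 2) : mu2 π χ j = (1 - π 1) * χ 0 j + π 1 * χ 1 j := by
  have h := hπ.sum_eq_one
  rw [Fin.sum_univ_two] at h
  rw [mu2, Fin.sum_univ_two, ← h, add_sub_cancel_right]

lemma exists_mu2_eq_iff (q : Fin 2 × Fin 2 → ℝ) (hq : IsProb q) (P S : ℝ) :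
    (∃ π : Fin 2 → ℝ, ∃ χ : Fin 2 → Fin 2 × Fin 2 → ℝ,
        IsProb π ∧ IsMarkov χ ∧ mu2 π χ = q ∧ (P, S) = (π 1, chi1 χ 1 1)) ↔
      P ∈ Set.Icc (0:ℝ) 1 ∧ S ∈ Set.Icc (0:ℝ) 1 ∧
        P - (q (0, 0) + q (0, 1)) ≤ P * S ∧ P * S ≤ q (1, 0) + q (1, 1) := by
  constructor
  · rintro ⟨π, χ, hπ, hχ, hμ, hPS⟩
    obtain ⟨rfl, rfl⟩ := Prod.mk.inj hPS
    have hmix : ∀ j, (1 - π 1) * χ 0 j + π 1 * χ 1 j = q j := fun j => by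
      rw [← hμ, mu2_apply_of_isProb hπ]
    have hs := (hχ 1).marginal_fst
    have h0 := mul_sum_le_sum_of_mixture (hχ 0).nonneg_s10 (hπ.le_one 1) hmix 0
    have h1 := mul_sum_le_sum_of_mixture (hχ 0).nonneg_s10 (hπ.le_one 1) hmix 1
    have hsum := hs.sum_eq_one
    simp only [Fin.sum_univ_two] at h0 h1 hsum
    rw [chi1_eq_sum]
    refine ⟨⟨hπ.nonneg_s10 1, hπ.le_one 1⟩, ⟨hs.nonneg_s10 1, hs.le_one 1⟩, ?_, ?_⟩
    · rw [Fin.sum_univ_two]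
      linear_combination h0 - π 1 * hsum
    · rwa [Fin.sum_univ_two]
  · rintro ⟨⟨hP0, hP1⟩, ⟨hS0, hS1⟩, hlo, hhi⟩
    obtain ⟨χ₀, χ₁, hχ₀, hχ₁, hmarg, hmix⟩ :=
      exists_mixture_of_mul_le hq (IsProb.vecCons_one_sub hS0 hS1) (P := P)
        (Fin.forall_fin_two.2 ⟨by simp [Fin.sum_univ_two]; linarith, by simpa using hhi⟩)
    refine ⟨![1 - P, P], ![χ₀, χ₁], IsProb.vecCons_one_sub hP0 hP1,
      Fin.forall_fin_two.2 ⟨hχ₀, hχ₁⟩, funext fun j => ?_, ?_⟩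
    · rw [mu2_apply_of_isProb (IsProb.vecCons_one_sub hP0 hP1)]
      exact hmix j
    · rw [chi1_eq_sum]
      exact Prod.ext rfl (hmarg 1).symm

/-- Lemma (set D): the set of pairs `(Pr, Se₁)` compatible with `q`. -/
theorem stmt_10 (q : Fin 2 × Fin 2 → ℝ) (hq : IsProb q) :
    Set.Nonempty {x : ℝ × ℝ |
        ∃ π : Fin 2 → ℝ, ∃ χ : Fin 2 → Fin 2 × Fin 2 → ℝ,
          IsProb π ∧ IsMarkov χ ∧ mu2 π χ = q ∧ x = (π 1, chi1 χ 1 1)} ∧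
    {x : ℝ × ℝ |
        ∃ π : Fin 2 → ℝ, ∃ χ : Fin 2 → Fin 2 × Fin 2 → ℝ,
          IsProb π ∧ IsMarkov χ ∧ mu2 π χ = q ∧ x = (π 1, chi1 χ 1 1)} =
    {x : ℝ × ℝ |
        x.1 ∈ Set.Icc (0:ℝ) 1 ∧ x.2 ∈ Set.Icc (0:ℝ) 1 ∧
        x.1 - (q (0, 0) + q (0, 1)) ≤ x.1 * x.2 ∧ x.1 * x.2 ≤ q (1, 0) + q (1, 1)} := by
  have hq₁ := hq.marginal_fst
  have hsum := hq₁.sum_eq_one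
  simp only [Fin.sum_univ_two] at hq₁ hsum
  refine ⟨⟨(1, q (1, 0) + q (1, 1)), (exists_mu2_eq_iff q hq _ _).2 ?_⟩,
    Set.ext fun ⟨P, S⟩ => exists_mu2_eq_iff q hq P S⟩
  exact ⟨⟨zero_le_one, le_rfl⟩, ⟨hq₁.nonneg_s10 1, hq₁.le_one 1⟩, by linarith, by linarith⟩
end
end

section
/- Lemma (set E). Let q ∈ Prob({0,1}²) and μ := μ₂. Then the set E := {(π₁, χ^{(2)}_{1|1}) : (π,χ) ∈ Θ₂, μ(π,χ) = q} is nonempty and equals the set of all (Pr, Se₂) ∈ [0,1]² satisfying Pr − q_{+0} ≤ Pr·Se₂ ≤ q_{+1}. -/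
open scoped BigOperators

noncomputable section

lemma aux_split (a b p c : ℝ) (ha : 0 ≤ a) (hb : 0 ≤ b) (hp : 0 ≤ p) (hc : 0 ≤ c)
    (h : p * c ≤ a + b) :
    ∃ w0 w1 : ℝ, 0 ≤ w0 ∧ 0 ≤ w1 ∧ w0 + w1 = 1 ∧
      p * (c * w0) ≤ a ∧ p * (c * w1) ≤ b ∧
      (c = a + b → c * w0 = a ∧ c * w1 = b) := by
  rcases eq_or_lt_of_le (by linarith : (0:ℝ) ≤ a + b) with h0 | h0
  · have ha0 : a = 0 := by linarith
    have hb0 : b = 0 := by linarith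
    have hpc : p * c = 0 := le_antisymm (by linarith) (mul_nonneg hp hc)
    refine ⟨1, 0, by norm_num, le_refl _, by norm_num, ?_, ?_, fun hcc => ?_⟩
    · nlinarith
    · nlinarith
    · constructor <;> nlinarith
  · refine ⟨a / (a + b), b / (a + b), div_nonneg ha h0.le, div_nonneg hb h0.le, ?_, ?_, ?_,
      fun hcc => ?_⟩
    · field_simp
    · have e : p * (c * (a / (a + b))) = p * c * a / (a + b) := by ring
      rw [e, div_le_iff₀ h0]
      nlinarith [mul_le_mul_of_nonneg_right h ha]
    · have e : p * (c * (b / (a + b))) = p * c * b / (a + b) := by ring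
      rw [e, div_le_iff₀ h0]
      nlinarith [mul_le_mul_of_nonneg_right h hb]
    · rw [hcc]
      constructor <;> field_simp

lemma sum_expand (f : Fin 2 × Fin 2 → ℝ) :
    ∑ j, f j = f (0,0) + f (0,1) + f (1,0) + f (1,1) := by
  rw [Fintype.sum_prod_type]
  simp only [Fin.sum_univ_two]
  ring

/-- Lemma (set E): the set of pairs `(Pr, Se₂)` compatible with `q`. -/
theorem stmt_11 (q : Fin 2 × Fin 2 → ℝ) (hq : IsProb q) :
    Set.Nonempty {x : ℝ × ℝ |
        ∃ π : Fin 2 → ℝ, ∃ χ : Fin 2 → Fin 2 × Fin 2 → ℝ,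
          IsProb π ∧ IsMarkov χ ∧ mu2 π χ = q ∧ x = (π 1, chi2 χ 1 1)} ∧
    {x : ℝ × ℝ |
        ∃ π : Fin 2 → ℝ, ∃ χ : Fin 2 → Fin 2 × Fin 2 → ℝ,
          IsProb π ∧ IsMarkov χ ∧ mu2 π χ = q ∧ x = (π 1, chi2 χ 1 1)} =
    {x : ℝ × ℝ |
        x.1 ∈ Set.Icc (0:ℝ) 1 ∧ x.2 ∈ Set.Icc (0:ℝ) 1 ∧
        x.1 - (q (0, 0) + q (1, 0)) ≤ x.1 * x.2 ∧ x.1 * x.2 ≤ q (0, 1) + q (1, 1)} := by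
  obtain ⟨hq01, hqsum⟩ := hq
  have hsum4 : q (0,0) + q (0,1) + q (1,0) + q (1,1) = 1 := by
    rw [sum_expand q] at hqsum; exact hqsum
  have hE : {x : ℝ × ℝ |
        ∃ π : Fin 2 → ℝ, ∃ χ : Fin 2 → Fin 2 × Fin 2 → ℝ,
          IsProb π ∧ IsMarkov χ ∧ mu2 π χ = q ∧ x = (π 1, chi2 χ 1 1)} =
      {x : ℝ × ℝ |
        x.1 ∈ Set.Icc (0:ℝ) 1 ∧ x.2 ∈ Set.Icc (0:ℝ) 1 ∧
        x.1 - (q (0, 0) + q (1, 0)) ≤ x.1 * x.2 ∧ x.1 * x.2 ≤ q (0, 1) + q (1, 1)} := by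
    ext x
    constructor
    · rintro ⟨π, χ, ⟨hπ01, hπsum⟩, hχ, hμ, hx⟩
      have hπs : π 0 + π 1 = 1 := by simpa [Fin.sum_univ_two] using hπsum
      obtain ⟨hχ0b, hχ0s⟩ := hχ 0
      obtain ⟨hχ1b, hχ1s⟩ := hχ 1
      have hχ1s4 : χ 1 (0,0) + χ 1 (0,1) + χ 1 (1,0) + χ 1 (1,1) = 1 := by
        rw [sum_expand (χ 1)] at hχ1s; exact hχ1s
      have h00 := congrFun hμ (0,0)
      have h01 := congrFun hμ (0,1)
      have h10 := congrFun hμ (1,0)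
      have h11 := congrFun hμ (1,1)
      simp only [mu2, Fin.sum_univ_two] at h00 h01 h10 h11
      subst hx
      simp only [Set.mem_setOf_eq, Set.mem_Icc]
      refine ⟨⟨(hπ01 1).1, (hπ01 1).2⟩, ⟨?_, ?_⟩, ?_, ?_⟩
      · have a1 := (hχ1b (0,1)).1
        have a2 := (hχ1b (1,1)).1
        simp only [chi2]
        linarith
      · have a1 := (hχ1b (0,0)).1
        have a2 := (hχ1b (1,0)).1
        simp only [chi2]
        linarith
      · simp only [chi2]
        nlinarith [mul_nonneg (hπ01 0).1 (hχ0b (0,0)).1,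
          mul_nonneg (hπ01 0).1 (hχ0b (1,0)).1, (hπ01 1).1]
      · simp only [chi2]
        nlinarith [mul_nonneg (hπ01 0).1 (hχ0b (0,1)).1,
          mul_nonneg (hπ01 0).1 (hχ0b (1,1)).1]
    · obtain ⟨Pr, Se⟩ := x
      rintro ⟨⟨hPr0, hPr1⟩, ⟨hSe0, hSe1⟩, hlow, hhigh⟩
      simp only at hPr0 hPr1 hSe0 hSe1 hlow hhigh
      have hlow' : Pr * (1 - Se) ≤ q (0,0) + q (1,0) := by nlinarith
      obtain ⟨u0, u1, hu0, hu1, hus, hua, hub, huq⟩ :=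
        aux_split (q (0,0)) (q (1,0)) Pr (1 - Se) (hq01 (0,0)).1 (hq01 (1,0)).1 hPr0
          (by linarith) hlow'
      obtain ⟨v0, v1, hv0, hv1, hvs, hva, hvb, hvq⟩ :=
        aux_split (q (0,1)) (q (1,1)) Pr Se (hq01 (0,1)).1 (hq01 (1,1)).1 hPr0 hSe0 hhigh
      set χ1 : Fin 2 × Fin 2 → ℝ := fun j =>
        if j.1 = 0 then (if j.2 = 0 then (1 - Se) * u0 else Se * v0)
        else (if j.2 = 0 then (1 - Se) * u1 else Se * v1) with hχ1def
      have e00 : χ1 (0,0) = (1 - Se) * u0 := by simp [hχ1def]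
      have e01 : χ1 (0,1) = Se * v0 := by simp [hχ1def]
      have e10 : χ1 (1,0) = (1 - Se) * u1 := by simp [hχ1def]
      have e11 : χ1 (1,1) = Se * v1 := by simp [hχ1def]
      have k00 : Pr * χ1 (0,0) ≤ q (0,0) := by rw [e00]; exact hua
      have k01 : Pr * χ1 (0,1) ≤ q (0,1) := by rw [e01]; exact hva
      have k10 : Pr * χ1 (1,0) ≤ q (1,0) := by rw [e10]; exact hub
      have k11 : Pr * χ1 (1,1) ≤ q (1,1) := by rw [e11]; exact hvb
      have n00 : 0 ≤ χ1 (0,0) := by rw [e00]; exact mul_nonneg (by linarith) hu0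
      have n01 : 0 ≤ χ1 (0,1) := by rw [e01]; exact mul_nonneg hSe0 hv0
      have n10 : 0 ≤ χ1 (1,0) := by rw [e10]; exact mul_nonneg (by linarith) hu1
      have n11 : 0 ≤ χ1 (1,1) := by rw [e11]; exact mul_nonneg hSe0 hv1
      have hχ1s4 : χ1 (0,0) + χ1 (0,1) + χ1 (1,0) + χ1 (1,1) = 1 := by
        rw [e00, e01, e10, e11]
        linear_combination (1 - Se) * hus + Se * hvs
      have b00 : χ1 (0,0) ≤ 1 := by linarith
      have b01 : χ1 (0,1) ≤ 1 := by linarith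
      have b10 : χ1 (1,0) ≤ 1 := by linarith
      have b11 : χ1 (1,1) ≤ 1 := by linarith
      have hχ1prob : IsProb χ1 := by
        constructor
        · intro j
          fin_cases j
          · exact ⟨n00, b00⟩
          · exact ⟨n01, b01⟩
          · exact ⟨n10, b10⟩
          · exact ⟨n11, b11⟩
        · rw [sum_expand χ1]; exact hχ1s4
      by_cases hp1 : Pr = 1
      · -- Pr = 1 : χ1 itself equals q
        subst hp1
        rw [one_mul] at hlow hhigh
        have hSeq : Se = q (0,1) + q (1,1) := by linarith
        have hSeq' : 1 - Se = q (0,0) + q (1,0) := by linarith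
        obtain ⟨g1, g2⟩ := huq hSeq'
        obtain ⟨g3, g4⟩ := hvq hSeq
        have q00 : χ1 (0,0) = q (0,0) := by rw [e00]; exact g1
        have q01 : χ1 (0,1) = q (0,1) := by rw [e01]; exact g3
        have q10 : χ1 (1,0) = q (1,0) := by rw [e10]; exact g2
        have q11 : χ1 (1,1) = q (1,1) := by rw [e11]; exact g4
        have hχ1q : χ1 = q := by
          funext j
          fin_cases j
          · exact q00
          · exact q01
          · exact q10
          · exact q11
        refine ⟨(fun i => if i = 0 then 0 else 1), (fun _ => χ1), ⟨?_, ?_⟩, ?_, ?_, ?_⟩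
        · intro i; fin_cases i <;> norm_num
        · simp [Fin.sum_univ_two]
        · intro i; exact hχ1prob
        · funext j
          simp [mu2, Fin.sum_univ_two, hχ1q]
        · have hc2 : chi2 (fun _ => χ1) 1 1 = Se := by
            simp only [chi2]
            rw [e01, e11]
            linear_combination Se * hvs
          rw [hc2]
          norm_num
      · -- Pr < 1
        have hlt : (0:ℝ) < 1 - Pr := by
          rcases lt_or_eq_of_le hPr1 with h | h
          · linarith
          · exact absurd h hp1
        set χ0 : Fin 2 × Fin 2 → ℝ := fun j => (q j - Pr * χ1 j) / (1 - Pr) with hχ0def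
        have cval : ∀ j, χ0 j = (q j - Pr * χ1 j) / (1 - Pr) := fun j => rfl
        have cnn : ∀ j, Pr * χ1 j ≤ q j → 0 ≤ χ0 j := by
          intro j hj
          rw [cval j]
          exact div_nonneg (by linarith) hlt.le
        have nn00 : 0 ≤ χ0 (0,0) := cnn _ k00
        have nn01 : 0 ≤ χ0 (0,1) := cnn _ k01
        have nn10 : 0 ≤ χ0 (1,0) := cnn _ k10
        have nn11 : 0 ≤ χ0 (1,1) := cnn _ k11
        have hs4c : χ0 (0,0) + χ0 (0,1) + χ0 (1,0) + χ0 (1,1) = 1 := by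
          rw [cval (0,0), cval (0,1), cval (1,0), cval (1,1)]
          field_simp
          linear_combination hsum4 - Pr * hχ1s4
        have cb00 : χ0 (0,0) ≤ 1 := by linarith
        have cb01 : χ0 (0,1) ≤ 1 := by linarith
        have cb10 : χ0 (1,0) ≤ 1 := by linarith
        have cb11 : χ0 (1,1) ≤ 1 := by linarith
        have hχ0prob : IsProb χ0 := by
          constructor
          · intro j
            fin_cases j
            · exact ⟨nn00, cb00⟩
            · exact ⟨nn01, cb01⟩
            · exact ⟨nn10, cb10⟩
            · exact ⟨nn11, cb11⟩
          · rw [sum_expand χ0]; exact hs4c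
        refine ⟨(fun i => if i = 0 then 1 - Pr else Pr), (fun i => if i = 0 then χ0 else χ1),
          ⟨?_, ?_⟩, ?_, ?_, ?_⟩
        · intro i
          fin_cases i <;> simp <;> constructor <;> linarith
        · simp [Fin.sum_univ_two]
        · intro i
          fin_cases i <;> simp [hχ0prob, hχ1prob]
        · funext j
          simp only [mu2, Fin.sum_univ_two]
          norm_num
          have hmul : (1 - Pr) * χ0 j = q j - Pr * χ1 j := by
            rw [cval j]
            field_simp
          linarith
        · have hf1 : (fun i : Fin 2 => if i = 0 then χ0 else χ1) 1 = χ1 := by norm_num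
          have hc2 : chi2 (fun i : Fin 2 => if i = 0 then χ0 else χ1) 1 1 = Se := by
            simp only [chi2, hf1]
            rw [e01, e11]
            linear_combination Se * hvs
          rw [hc2]
          norm_num
  refine ⟨?_, hE⟩
  rw [hE]
  refine ⟨(1, q (0,1) + q (1,1)), ?_⟩
  have h1 := (hq01 (0,0)).1
  have h2 := (hq01 (1,0)).1
  have h3 := (hq01 (0,1)).1
  have h4 := (hq01 (1,1)).1
  simp only [Set.mem_setOf_eq, Set.mem_Icc]
  refine ⟨⟨by norm_num, le_refl 1⟩, ⟨by linarith, by linarith⟩, by nlinarith, by nlinarith⟩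
end
end

section
/- Lemma (set C≤, restricted model). Let q ∈ Prob({0,1}²) and μ := μ₂. Then the set C≤ := {(π₁, χ^{(2)}_{1|1} − χ^{(1)}_{1|1}) : (π,χ) ∈ Θ₂, μ(π,χ) = q, χ^{(1)}_{0|0} ≤ χ^{(2)}_{0|0}} is nonempty and equals the set of all (Pr, ΔSe) ∈ [0,1] × [−1,1] satisfying q₀₁ − q₁₀ ≤ Pr·ΔSe ≤ min(q₀₁, q₀₁ − q₁₀ + 1 − Pr). -/
open scoped BigOperators

noncomputable section

/-! Necessity: writing `P = π₁`, `bᵢ = χ_{01|i}`, `cᵢ = χ_{10|i}`, the mixture equations give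
`P·ΔSe = P(b₁ - c₁) = q₀₁ - q₁₀ + (1 - P)(c₀ - b₀)`, and the restriction is `b₀ ≤ c₀`.
Sufficiency: for `0 < P < 1` it suffices to find the part `r ≤ q` of `q` contributed by the
second component, of total mass `P` and with `r₀₁ - r₁₀ = P·ΔSe`; then `χ_{·|1} = r / P` and
`χ_{·|0} = (q - r) / (1 - P)`. The boundary cases `P = 0` and `P = 1` have explicit witnesses. -/

def cLe (q : Fin 2 × Fin 2 → ℝ) : Set (ℝ × ℝ) :=
  {x | ∃ π : Fin 2 → ℝ, ∃ χ : Fin 2 → Fin 2 × Fin 2 → ℝ,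
    IsProb π ∧ IsMarkov χ ∧ mu2 π χ = q ∧ chi1 χ 0 0 ≤ chi2 χ 0 0 ∧
    x = (π 1, chi2 χ 1 1 - chi1 χ 1 1)}

def cells (a b c d : ℝ) : Fin 2 × Fin 2 → ℝ :=
  fun p => ![![a, b], ![c, d]] p.1 p.2

lemma isProb_iff {X : Type*} [Fintype X] {p : X → ℝ} :
    IsProb p ↔ (∀ x, 0 ≤ p x) ∧ ∑ x, p x = 1 :=
  ⟨fun h => ⟨fun x => (h.1 x).1, h.2⟩, fun ⟨h0, h1⟩ =>
    ⟨fun x => ⟨h0 x, h1 ▸ Finset.single_le_sum (fun y _ => h0 y) (Finset.mem_univ x)⟩, h1⟩⟩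

lemma isProb_fin_two_iff {p : Fin 2 → ℝ} :
    IsProb p ↔ 0 ≤ p 0 ∧ 0 ≤ p 1 ∧ p 0 + p 1 = 1 := by
  simp only [isProb_iff, Fin.forall_fin_two, Fin.sum_univ_two, and_assoc]

lemma isProb_fin_two_prod_iff {p : Fin 2 × Fin 2 → ℝ} :
    IsProb p ↔ (∀ x, 0 ≤ p x) ∧ p (0, 0) + p (0, 1) + p (1, 0) + p (1, 1) = 1 := by
  simp only [isProb_iff, Fintype.sum_prod_type, Fin.sum_univ_two, ← add_assoc]

lemma isProb_cells {a b c d : ℝ} (ha : 0 ≤ a) (hb : 0 ≤ b) (hc : 0 ≤ c) (hd : 0 ≤ d)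
    (hsum : a + b + c + d = 1) : IsProb (cells a b c d) := by
  refine isProb_fin_two_prod_iff.2 ⟨?_, by simpa [cells] using hsum⟩
  simp [Prod.forall, Fin.forall_fin_two, cells, ha, hb, hc, hd]

lemma isProb_div_of_sum_eq {X : Type*} [Fintype X] {r : X → ℝ} {P : ℝ} (hr : ∀ x, 0 ≤ r x)
    (hrP : ∑ x, r x = P) (hP : 0 < P) : IsProb (fun x => r x / P) := by
  refine isProb_iff.2 ⟨fun x => div_nonneg (hr x) hP.le, ?_⟩
  rw [← Finset.sum_div, hrP, div_self hP.ne']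

lemma bounds_of_mem_cLe {q : Fin 2 × Fin 2 → ℝ} {P Δ : ℝ} (h : (P, Δ) ∈ cLe q) :
    P ∈ Set.Icc 0 1 ∧ Δ ∈ Set.Icc (-1) 1 ∧ q (0, 1) - q (1, 0) ≤ P * Δ ∧
      P * Δ ≤ min (q (0, 1)) (q (0, 1) - q (1, 0) + 1 - P) := by
  obtain ⟨π, χ, hπ, hχ, hmu, hle, hx⟩ := h
  obtain ⟨rfl, rfl⟩ := Prod.mk.inj hx
  obtain ⟨hπ0, hπ1, hπsum⟩ := isProb_fin_two_iff.1 hπ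
  obtain ⟨hχ0, hχ0sum⟩ := isProb_fin_two_prod_iff.1 (hχ 0)
  obtain ⟨hχ1, hχ1sum⟩ := isProb_fin_two_prod_iff.1 (hχ 1)
  have hq01 : π 0 * χ 0 (0, 1) + π 1 * χ 1 (0, 1) = q (0, 1) := by
    simpa [mu2, Fin.sum_univ_two] using congrFun hmu (0, 1)
  have hq10 : π 0 * χ 0 (1, 0) + π 1 * χ 1 (1, 0) = q (1, 0) := by
    simpa [mu2, Fin.sum_univ_two] using congrFun hmu (1, 0)
  simp only [chi1, chi2] at hle ⊢
  have hΔ : χ 1 (0, 1) + χ 1 (1, 1) - (χ 1 (1, 0) + χ 1 (1, 1)) = χ 1 (0, 1) - χ 1 (1, 0) := by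
    ring
  have key : π 1 * (χ 1 (0, 1) - χ 1 (1, 0)) =
      q (0, 1) - q (1, 0) + π 0 * (χ 0 (1, 0) - χ 0 (0, 1)) := by
    linear_combination hq01 - hq10
  have hc₀b₀ : 0 ≤ χ 0 (1, 0) - χ 0 (0, 1) := by linarith
  have hc₀ : χ 0 (1, 0) ≤ 1 := by linarith [hχ0 (0, 0), hχ0 (0, 1), hχ0 (1, 1)]
  have hb₁ : χ 1 (0, 1) ≤ 1 := by linarith [hχ1 (0, 0), hχ1 (1, 0), hχ1 (1, 1)]
  have hc₁ : χ 1 (1, 0) ≤ 1 := by linarith [hχ1 (0, 0), hχ1 (0, 1), hχ1 (1, 1)]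
  rw [hΔ]
  refine ⟨⟨hπ1, by linarith⟩, ⟨by linarith [hχ1 (0, 1)], by linarith [hχ1 (1, 0)]⟩, ?_,
    le_min ?_ ?_⟩
  · linarith [mul_nonneg hπ0 hc₀b₀]
  · linarith [mul_nonneg hπ0 (hχ0 (0, 1)), mul_nonneg hπ1 (hχ1 (1, 0))]
  · linarith [mul_nonneg hπ0 (by linarith [hχ0 (0, 1)] : 0 ≤ 1 - (χ 0 (1, 0) - χ 0 (0, 1)))]

lemma mem_cLe_of_mixture {q χ₀ χ₁ : Fin 2 × Fin 2 → ℝ} {P : ℝ} (hP : P ∈ Set.Icc 0 1)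
    (hχ₀ : IsProb χ₀) (hχ₁ : IsProb χ₁) (hmix : ∀ x, (1 - P) * χ₀ x + P * χ₁ x = q x)
    (hle : χ₀ (0, 1) ≤ χ₀ (1, 0)) : (P, χ₁ (0, 1) - χ₁ (1, 0)) ∈ cLe q := by
  refine ⟨![1 - P, P], ![χ₀, χ₁], ?_, Fin.forall_fin_two.2 ⟨hχ₀, hχ₁⟩, ?_, ?_, ?_⟩
  · exact isProb_fin_two_iff.2 ⟨by simp [hP.2], by simp [hP.1], by simp⟩
  · funext x
    simpa [mu2, Fin.sum_univ_two] using hmix x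
  · simpa [chi1, chi2] using hle
  · simp only [chi1, chi2, Matrix.cons_val_one, Matrix.cons_val_zero, Prod.mk.injEq, true_and]
    ring

lemma mem_cLe_zero {q : Fin 2 × Fin 2 → ℝ} (hq : IsProb q) (hle : q (0, 1) ≤ q (1, 0))
    {Δ : ℝ} (hΔ : Δ ∈ Set.Icc (-1) 1) : (0, Δ) ∈ cLe q := by
  have hχ₁ : IsProb (cells 0 ((1 + Δ) / 2) ((1 - Δ) / 2) 0) :=
    isProb_cells le_rfl (by linarith [hΔ.1]) (by linarith [hΔ.2]) le_rfl (by ring)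
  convert mem_cLe_of_mixture ⟨le_rfl, zero_le_one⟩ hq hχ₁ (fun x => by ring) hle using 2
  simp [cells]
  ring

lemma mem_cLe_one {q : Fin 2 × Fin 2 → ℝ} (hq : IsProb q) : (1, q (0, 1) - q (1, 0)) ∈ cLe q :=
  mem_cLe_of_mixture ⟨zero_le_one, le_rfl⟩ (isProb_cells zero_le_one le_rfl le_rfl le_rfl
    (by ring)) hq (fun x => by ring) (by simp [cells])

lemma mem_cLe_of_le {q r : Fin 2 × Fin 2 → ℝ} (hq : IsProb q) {P : ℝ} (hP₀ : 0 < P) (hP₁ : P < 1)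
    (hr : ∀ x, 0 ≤ r x ∧ r x ≤ q x) (hrP : ∑ x, r x = P)
    (hle : q (0, 1) - r (0, 1) ≤ q (1, 0) - r (1, 0)) :
    (P, (r (0, 1) - r (1, 0)) / P) ∈ cLe q := by
  have hP₁' : 0 < 1 - P := sub_pos.2 hP₁
  have hχ₀ : IsProb (fun x => (q x - r x) / (1 - P)) := by
    refine isProb_div_of_sum_eq (fun x => sub_nonneg.2 (hr x).2) ?_ hP₁'
    rw [Finset.sum_sub_distrib, hq.2, hrP]
  have hχ₁ : IsProb (fun x => r x / P) := isProb_div_of_sum_eq (fun x => (hr x).1) hrP hP₀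
  convert mem_cLe_of_mixture (q := q) ⟨hP₀.le, hP₁.le⟩ hχ₀ hχ₁
    (fun x => by rw [mul_div_cancel₀ _ hP₁'.ne', mul_div_cancel₀ _ hP₀.ne', sub_add_cancel])
    (div_le_div_of_nonneg_right hle hP₁'.le) using 2
  exact sub_div _ _ _

lemma exists_add_eq_of_le_add {a b t : ℝ} (ha : 0 ≤ a) (hb : 0 ≤ b) (ht₀ : 0 ≤ t)
    (ht : t ≤ a + b) :
    ∃ x y, 0 ≤ x ∧ x ≤ a ∧ 0 ≤ y ∧ y ≤ b ∧ x + y = t :=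
  ⟨min a t, t - min a t, le_min ha ht₀, min_le_left a t, sub_nonneg.2 (min_le_right a t),
    by rcases min_cases a t with ⟨h, -⟩ | ⟨h, -⟩ <;> rw [h] <;> linarith, by ring⟩

lemma exists_offDiag_masses {q : Fin 2 × Fin 2 → ℝ} (hq : IsProb q) {P s : ℝ}
    (hs : |s| ≤ P) (hlb : q (0, 1) - q (1, 0) ≤ s) (hub₁ : s ≤ q (0, 1))
    (hub₂ : s ≤ q (0, 1) - q (1, 0) + 1 - P) :
    ∃ β γ, 0 ≤ β ∧ β ≤ q (0, 1) ∧ 0 ≤ γ ∧ γ ≤ q (1, 0) ∧ β - γ = s ∧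
      0 ≤ P - β - γ ∧ P - β - γ ≤ q (0, 0) + q (1, 1) := by
  obtain ⟨hq0, hqsum⟩ := isProb_fin_two_prod_iff.1 hq
  have hq₀₀ := hq0 (0, 0)
  have hq₀₁ := hq0 (0, 1)
  have hq₁₀ := hq0 (1, 0)
  have hq₁₁ := hq0 (1, 1)
  obtain ⟨hs₁, hs₂⟩ := abs_le.1 hs
  set L := q (0, 1) + q (1, 0) + P - 1
  -- the least `β` with `β ≥ 0`, `γ = β - s ≥ 0` and `P - β - γ ≤ q₀₀ + q₁₁`
  set β := max (max 0 s) ((L + s) / 2)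
  have hβ₀ : 0 ≤ β := le_max_of_le_left (le_max_left _ _)
  have hβs : s ≤ β := le_max_of_le_left (le_max_right _ _)
  have hβL : (L + s) / 2 ≤ β := le_max_right _ _
  have hβq₀₁ : β ≤ q (0, 1) := max_le (max_le (by linarith) hub₁) (by linarith)
  have hβq₁₀ : β ≤ q (1, 0) + s := max_le (max_le (by linarith) (by linarith)) (by linarith)
  have hβP : β ≤ (P + s) / 2 := max_le (max_le (by linarith) (by linarith)) (by linarith)
  exact ⟨β, β - s, hβ₀, hβq₀₁, by linarith, by linarith, by ring, by linarith, by linarith⟩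

lemma exists_le_sum_eq {q : Fin 2 × Fin 2 → ℝ} (hq : IsProb q) {P s : ℝ}
    (hs : |s| ≤ P) (hlb : q (0, 1) - q (1, 0) ≤ s) (hub₁ : s ≤ q (0, 1))
    (hub₂ : s ≤ q (0, 1) - q (1, 0) + 1 - P) :
    ∃ r : Fin 2 × Fin 2 → ℝ, (∀ x, 0 ≤ r x ∧ r x ≤ q x) ∧ ∑ x, r x = P ∧
      r (0, 1) - r (1, 0) = s := by
  obtain ⟨β, γ, hβ₀, hβ, hγ₀, hγ, hβγ, ht₀, ht⟩ := exists_offDiag_masses hq hs hlb hub₁ hub₂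
  obtain ⟨a, d, ha₀, ha, hd₀, hd, had⟩ :=
    exists_add_eq_of_le_add (hq.1 (0, 0)).1 (hq.1 (1, 1)).1 ht₀ ht
  refine ⟨cells a β γ d, ?_, ?_, by simpa [cells] using hβγ⟩
  · simp [Prod.forall, Fin.forall_fin_two, cells, ha₀, ha, hβ₀, hβ, hγ₀, hγ, hd₀, hd]
  · simp [Fintype.sum_prod_type, Fin.sum_univ_two, cells]
    linarith

lemma mem_cLe_of_bounds {q : Fin 2 × Fin 2 → ℝ} (hq : IsProb q) {P Δ : ℝ}
    (hP : P ∈ Set.Icc 0 1) (hΔ : Δ ∈ Set.Icc (-1) 1) (hlb : q (0, 1) - q (1, 0) ≤ P * Δ)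
    (hub : P * Δ ≤ min (q (0, 1)) (q (0, 1) - q (1, 0) + 1 - P)) : (P, Δ) ∈ cLe q := by
  obtain ⟨hub₁, hub₂⟩ := le_min_iff.1 hub
  rcases hP.1.eq_or_lt with rfl | hP₀
  · exact mem_cLe_zero hq (by linarith) hΔ
  rcases hP.2.eq_or_lt with rfl | hP₁
  · convert mem_cLe_one hq using 2
    linarith
  have hs : |P * Δ| ≤ P := by
    rw [abs_mul, abs_of_pos hP₀]
    exact mul_le_of_le_one_right hP₀.le (abs_le.2 hΔ)
  obtain ⟨r, hr, hrP, hrs⟩ := exists_le_sum_eq hq hs hlb hub₁ hub₂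
  convert mem_cLe_of_le hq hP₀ hP₁ hr hrP (by linarith) using 2
  rw [hrs, mul_div_cancel_left₀ _ hP₀.ne']

/-- Lemma (set C≤, restricted model): the set of pairs `(Pr, ΔSe)` compatible with `q`
under the restriction `Sp₁ ≤ Sp₂`. -/
theorem stmt_13 (q : Fin 2 × Fin 2 → ℝ) (hq : IsProb q) :
    Set.Nonempty {x : ℝ × ℝ |
        ∃ π : Fin 2 → ℝ, ∃ χ : Fin 2 → Fin 2 × Fin 2 → ℝ,
          IsProb π ∧ IsMarkov χ ∧ mu2 π χ = q ∧ chi1 χ 0 0 ≤ chi2 χ 0 0 ∧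
          x = (π 1, chi2 χ 1 1 - chi1 χ 1 1)} ∧
    {x : ℝ × ℝ |
        ∃ π : Fin 2 → ℝ, ∃ χ : Fin 2 → Fin 2 × Fin 2 → ℝ,
          IsProb π ∧ IsMarkov χ ∧ mu2 π χ = q ∧ chi1 χ 0 0 ≤ chi2 χ 0 0 ∧
          x = (π 1, chi2 χ 1 1 - chi1 χ 1 1)} =
    {x : ℝ × ℝ |
        x.1 ∈ Set.Icc (0:ℝ) 1 ∧ x.2 ∈ Set.Icc (-1:ℝ) 1 ∧
        q (0, 1) - q (1, 0) ≤ x.1 * x.2 ∧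
        x.1 * x.2 ≤ min (q (0, 1)) (q (0, 1) - q (1, 0) + 1 - x.1)} := by
  change (cLe q).Nonempty ∧ cLe q = _
  exact ⟨⟨_, mem_cLe_one hq⟩, Set.ext fun ⟨P, Δ⟩ => ⟨bounds_of_mem_cLe,
    fun ⟨hP, hΔ, hlb, hub⟩ => mem_cLe_of_bounds hq hP hΔ hlb hub⟩⟩

end
end

section
/- Lemma (set D≤, restricted model). Let q ∈ Prob({0,1}²) and μ := μ₂. Then the set D≤ := {(π₁, χ^{(1)}_{1|1}) : (π,χ) ∈ Θ₂, μ(π,χ) = q, χ^{(1)}_{0|0} ≤ χ^{(2)}_{0|0}} is included in the set of all (Pr, Se₁) ∈ [0,1]² satisfying Pr − q_{0+} ≤ Pr·Se₁ ≤ min(q_{1+}, Pr + q₁₀ − q₀₁). -/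
open scoped BigOperators

noncomputable section

/-- Lemma (set D≤, restricted model): inclusion for the set of pairs `(Pr, Se₁)`
compatible with `q` under the restriction `Sp₁ ≤ Sp₂`. -/
theorem stmt_14 (q : Fin 2 × Fin 2 → ℝ) (hq : IsProb q) :
    {x : ℝ × ℝ |
        ∃ π : Fin 2 → ℝ, ∃ χ : Fin 2 → Fin 2 × Fin 2 → ℝ,
          IsProb π ∧ IsMarkov χ ∧ mu2 π χ = q ∧ chi1 χ 0 0 ≤ chi2 χ 0 0 ∧
          x = (π 1, chi1 χ 1 1)} ⊆
    {x : ℝ × ℝ |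
        x.1 ∈ Set.Icc (0:ℝ) 1 ∧ x.2 ∈ Set.Icc (0:ℝ) 1 ∧
        x.1 - (q (0, 0) + q (0, 1)) ≤ x.1 * x.2 ∧
        x.1 * x.2 ≤ min (q (1, 0) + q (1, 1)) (x.1 + q (1, 0) - q (0, 1))} := by
  rintro ⟨Pr, Se⟩ ⟨π, χ, ⟨hπb, hπs⟩, hχ, hμ, hle, hx⟩
  obtain ⟨hc0b, hc0s⟩ := hχ 0
  obtain ⟨hc1b, hc1s⟩ := hχ 1
  obtain ⟨hP, hS⟩ : Pr = π 1 ∧ Se = chi1 χ 1 1 := by simpa [Prod.ext_iff] using hx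
  have e00 := congrFun hμ (0,0)
  have e01 := congrFun hμ (0,1)
  have e10 := congrFun hμ (1,0)
  have e11 := congrFun hμ (1,1)
  simp only [mu2, Fin.sum_univ_two] at e00 e01 e10 e11
  have hπs' : π 0 + π 1 = 1 := by simpa [Fin.sum_univ_two] using hπs
  have hc0s' : χ 0 (0,0) + χ 0 (0,1) + χ 0 (1,0) + χ 0 (1,1) = 1 := by
    have := hc0s; rw [Fintype.sum_prod_type] at this
    simp only [Fin.sum_univ_two] at this; linarith
  have hc1s' : χ 1 (0,0) + χ 1 (0,1) + χ 1 (1,0) + χ 1 (1,1) = 1 := by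
    have := hc1s; rw [Fintype.sum_prod_type] at this
    simp only [Fin.sum_univ_two] at this; linarith
  have hle' : χ 0 (0,1) ≤ χ 0 (1,0) := by
    simp only [chi1, chi2] at hle; linarith
  have hπ0 := (hπb 0).1
  have hπ1 := (hπb 1).1
  have h1 := (hc1b (0,0)).1
  have h2 := (hc1b (0,1)).1
  have h3 := (hc1b (1,0)).1
  have h4 := (hc1b (1,1)).1
  have h5 := (hc0b (0,0)).1
  have h6 := (hc0b (0,1)).1
  have h7 := (hc0b (1,0)).1
  have h8 := (hc0b (1,1)).1
  subst hP hS
  simp only [chi1, Set.mem_setOf_eq, Set.mem_Icc, le_min_iff]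
  refine ⟨⟨hπ1, by linarith⟩, ⟨by linarith, by linarith⟩, ?_, ?_, ?_⟩
  · nlinarith [mul_nonneg hπ0 h5, mul_nonneg hπ0 h6]
  · nlinarith [mul_nonneg hπ0 h7, mul_nonneg hπ0 h8]
  · nlinarith [mul_nonneg hπ0 (sub_nonneg.2 hle'), mul_nonneg hπ1 h1, mul_nonneg hπ1 h3]


end
end

section
/- Lemma (set E≤, restricted model). Let q ∈ Prob({0,1}²) and μ := μ₂. Then E≤ := {χ^{(1)}_{1|1} : (π,χ) ∈ Θ₂, μ(π,χ) = q, χ^{(1)}_{0|0} ≤ χ^{(2)}_{0|0}} ⊆ [0, min(q_{1+}/q_{+1}, 1)], where the quotient q_{1+}/q_{+1} is interpreted as ∞ if q_{+1} = 0 < q_{1+}, and as 1 if q_{1+} = q_{+1} = 0. -/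
open scoped BigOperators

noncomputable section

open Classical in
/-- Lemma (set E≤, restricted model): under the restriction `Sp₁ ≤ Sp₂`, the
sensitivity of the first test is at most `min(q₁₊/q₊₁, 1)`, with the convention
that the quotient is `∞` if `q₊₁ = 0 < q₁₊` and `1` if `q₁₊ = q₊₁ = 0`
(in both cases the minimum with `1` equals `1`). -/
theorem stmt_15 (q : Fin 2 × Fin 2 → ℝ) (hq : IsProb q) :
    {Se₁ : ℝ |
        ∃ π : Fin 2 → ℝ, ∃ χ : Fin 2 → Fin 2 × Fin 2 → ℝ,
          IsProb π ∧ IsMarkov χ ∧ mu2 π χ = q ∧ chi1 χ 0 0 ≤ chi2 χ 0 0 ∧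
          Se₁ = chi1 χ 1 1} ⊆
    Set.Icc 0 (if q (0, 1) + q (1, 1) = 0 then 1
      else min ((q (1, 0) + q (1, 1)) / (q (0, 1) + q (1, 1))) 1) := by
  rintro s ⟨π, χ, ⟨hπpos, hπsum⟩, hM, hmu, hcon, rfl⟩
  have hπ0 := (hπpos 0).1
  have hπ1 := (hπpos 1).1
  have hπs : π 0 + π 1 = 1 := by simpa [Fin.sum_univ_two] using hπsum
  have h0nn : ∀ j, 0 ≤ χ 0 j := fun j => ((hM 0).1 j).1
  have h1nn : ∀ j, 0 ≤ χ 1 j := fun j => ((hM 1).1 j).1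
  have h0s : χ 0 (0,0) + χ 0 (0,1) + χ 0 (1,0) + χ 0 (1,1) = 1 := by
    have := (hM 0).2
    simp only [Fintype.sum_prod_type, Fin.sum_univ_two] at this
    linarith
  have h1s : χ 1 (0,0) + χ 1 (0,1) + χ 1 (1,0) + χ 1 (1,1) = 1 := by
    have := (hM 1).2
    simp only [Fintype.sum_prod_type, Fin.sum_univ_two] at this
    linarith
  have hqj : ∀ j, π 0 * χ 0 j + π 1 * χ 1 j = q j := by
    intro j; rw [← hmu]; simp [mu2, Fin.sum_univ_two]
  have hcon' : χ 0 (0,1) ≤ χ 0 (1,0) := by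
    simp only [chi1, chi2] at hcon; linarith
  set t := χ 1 (1,0) + χ 1 (1,1) with ht
  have hts : chi1 χ 1 1 = t := rfl
  have ht0 : 0 ≤ t := by have := h1nn (1,0); have := h1nn (1,1); linarith
  have ht1 : t ≤ 1 := by have := h1nn (0,0); have := h1nn (0,1); linarith
  have hq1p : q (1,0) + q (1,1) = π 0 * (χ 0 (1,0) + χ 0 (1,1)) + π 1 * t := by
    rw [← hqj (1,0), ← hqj (1,1)]; ring
  have hqp1 : q (0,1) + q (1,1) =
      π 0 * (χ 0 (0,1) + χ 0 (1,1)) + π 1 * (χ 1 (0,1) + χ 1 (1,1)) := by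
    rw [← hqj (0,1), ← hqj (1,1)]; ring
  have key : t * (q (0,1) + q (1,1)) ≤ q (1,0) + q (1,1) := by
    rw [hq1p, hqp1]
    have h1 : t * (χ 0 (0,1) + χ 0 (1,1)) ≤ χ 0 (1,0) + χ 0 (1,1) := by
      have hnn : 0 ≤ χ 0 (0,1) + χ 0 (1,1) := by
        have := h0nn (0,1); have := h0nn (1,1); linarith
      have := mul_le_of_le_one_left hnn ht1
      linarith
    have h2 : t * (χ 1 (0,1) + χ 1 (1,1)) ≤ t := by
      have : χ 1 (0,1) + χ 1 (1,1) ≤ 1 := by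
        have := h1nn (0,0); have := h1nn (1,0); linarith
      nlinarith
    nlinarith
  have hqp1nn : 0 ≤ q (0,1) + q (1,1) := by
    have := (hq.1 (0,1)).1; have := (hq.1 (1,1)).1; linarith
  rw [hts]
  constructor
  · exact ht0
  · split_ifs with h
    · exact ht1
    · have hpos : 0 < q (0,1) + q (1,1) := lt_of_le_of_ne hqp1nn (Ne.symm h)
      exact le_min ((le_div_iff₀ hpos).mpr key) ht1

end
end
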